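/- arXiv:2201.11729 — 2 statements merged into one kernel-verified Lean document; each statement's English description precedes it below -/
import Mathlib

section
/- Under gradient flow over the hierarchical tensor factorization objective, let ν ∈ int(T) and r ∈ [R_ν]. If there exists a time t_0 ≥ 0 at which w(t_0) = 0 for all w ∈ LC(ν,r), then w(t) = 0 for all w ∈ LC(ν,r) and all t ≥ 0, i.e., the weight vectors of the (ν,r)'th local component are identically zero through time. -/
namespace HTF

/-- Rooted tree whose leaves are labeled by elements of `Fin N`. -/
inductive MTree (N : ℕ) : Type
  | leaf : Fin N → MTree N
  | node : List (MTree N) → MTree N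

noncomputable instance {N : ℕ} : DecidableEq (MTree N) := fun _ _ => Classical.dec _

namespace MTree

variable {N : ℕ}

/-- The list of leaf labels of the tree. -/
def leafList : MTree N → List (Fin N)
  | .leaf i => [i]
  | .node ts => ts.attach.flatMap fun t => t.1.leafList
decreasing_by simp only [MTree.node.sizeOf_spec]; have := List.sizeOf_lt_of_mem t.2; omega

/-- The label of a node: set of leaf indices appearing in its subtree. -/
def label (t : MTree N) : Finset (Fin N) := t.leafList.toFinset

/-- All nodes (subtrees) of the tree. -/
def nodes : MTree N → List (MTree N)
  | .leaf i => [.leaf i]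
  | .node ts => .node ts :: ts.attach.flatMap fun t => t.1.nodes
decreasing_by simp only [MTree.node.sizeOf_spec]; have := List.sizeOf_lt_of_mem t.2; omega

/-- The children of a node. -/
def children : MTree N → List (MTree N)
  | .leaf _ => []
  | .node ts => ts

/-- Interior (non-leaf) node. -/
def IsInterior : MTree N → Prop
  | .leaf _ => False
  | .node _ => True

/-- Every non-leaf node has at least one child. -/
def Branching : MTree N → Prop
  | .leaf _ => True
  | .node ts => ts ≠ [] ∧ ∀ t ∈ ts.attach, Branching t.1
decreasing_by simp only [MTree.node.sizeOf_spec]; have := List.sizeOf_lt_of_mem t.2; omega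

/-- A valid mode tree over `[N]`: it has exactly `N` leaves, labeled `{1},...,{N}`
(each index appearing exactly once), and interior nodes have children. -/
def Valid (t : MTree N) : Prop :=
  t.leafList.Nodup ∧ (∀ i : Fin N, i ∈ t.leafList) ∧ t.Branching

/-- The parent of node `ν` in the tree (first argument), if it exists. -/
noncomputable def parentIn : MTree N → MTree N → Option (MTree N)
  | .leaf _, _ => none
  | .node ts, ν =>
      if ν ∈ ts then some (.node ts)
      else ts.attach.findSome? fun t => parentIn t.1 ν
termination_by T _ => sizeOf T
decreasing_by simp only [MTree.node.sizeOf_spec]; have := List.sizeOf_lt_of_mem t.2; omega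

end MTree

open MTree

variable {N : ℕ} (D : Fin N → ℕ)

/-- Full index set of an order-`N` tensor with mode dimensions `D`. -/
abbrev Idx : Type := ∀ n, Fin (D n)

/-- The intermediate tensors `W^(ν,r)` of a hierarchical tensor factorization with
local-component numbers `R` and weight matrices `W` (columns indexed by `ℕ`).
An order-`|label ν|` tensor is represented as a function of a full index tuple that
only depends on the coordinates in `label ν`; with this representation, the tensor
product of tensors over disjoint mode sets is pointwise multiplication and the mode
permutation `π_ν` is the identity. -/
noncomputable def interm (R : MTree N → ℕ) (W : ∀ ν : MTree N, Fin (R ν) → ℕ → ℝ) :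
    MTree N → ℕ → Idx D → ℝ
  | .leaf i, r => fun x =>
      if h : R (.leaf i) = D i then W (.leaf i) (Fin.cast h.symm (x i)) r else 0
  | .node ts, r => fun x =>
      ∑ r' : Fin (R (.node ts)),
        W (.node ts) r' r * (ts.attach.map fun t => interm R W t.1 (r' : ℕ) x).prod
decreasing_by simp only [MTree.node.sizeOf_spec]; have := List.sizeOf_lt_of_mem t.2; omega

/-- The end tensor `W_H` of the hierarchical tensor factorization with mode tree `T`. -/
noncomputable def endT (R : MTree N → ℕ) (W : ∀ ν : MTree N, Fin (R ν) → ℕ → ℝ)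
    (T : MTree N) : Idx D → ℝ :=
  interm D R W T 0

/-- Entry `(i, j)` of the weight matrix at node `ν` (zero outside the row range). -/
noncomputable def went (R : MTree N → ℕ) (W : ∀ ν : MTree N, Fin (R ν) → ℕ → ℝ)
    (ν : MTree N) (i j : ℕ) : ℝ :=
  if h : i < R ν then W ν ⟨i, h⟩ j else 0

/-- `R_{Pa(ν)}` : the number of local components at the parent of `ν` in `T`
(`1` if `ν` is the root). -/
noncomputable def Rpar (R : MTree N → ℕ) (T ν : MTree N) : ℕ :=
  if ν = T then 1 else ((parentIn T ν).map R).getD 0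

/-- Replace the weight matrix at node `μ` by `A`, keeping all other weight matrices. -/
noncomputable def replace (R : MTree N → ℕ) (W : ∀ ν : MTree N, Fin (R ν) → ℕ → ℝ)
    (μ : MTree N) (A : Fin (R μ) → ℕ → ℝ) : ∀ ν : MTree N, Fin (R ν) → ℕ → ℝ :=
  fun ν => if h : ν = μ then fun i j => A (Fin.cast (congrArg R h) i) j else W ν

/-- Frobenius (Euclidean) inner product of order-`N` tensors. -/
noncomputable def tinner (A B : Idx D → ℝ) : ℝ := ∑ x, A x * B x

/-- Frobenius norm of an order-`N` tensor. -/
noncomputable def tnorm (A : Idx D → ℝ) : ℝ := Real.sqrt (∑ x, (A x) ^ 2)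

/-- Frobenius norm of an order-`|s|` tensor represented as a function of a full index
tuple depending only on the coordinates in `s` (so that the sum over the full index
set over-counts each entry `∏_{n ∉ s} D n` times). -/
noncomputable def rnorm (s : Finset (Fin N)) (A : Idx D → ℝ) : ℝ :=
  Real.sqrt ((∑ x, (A x) ^ 2) / ∏ n ∈ sᶜ, (D n : ℝ))

/-- Squared norm of the `r`'th column of the weight matrix at node `c`. -/
noncomputable def colSq (R : MTree N → ℕ) (W : ∀ ν : MTree N, Fin (R ν) → ℕ → ℝ)
    (c : MTree N) (r : ℕ) : ℝ :=
  ∑ i : Fin (R c), (W c i r) ^ 2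

/-- Squared norm of the `r`'th row of the weight matrix at node `ν` of `T`. -/
noncomputable def rowSq (R : MTree N → ℕ) (W : ∀ ν : MTree N, Fin (R ν) → ℕ → ℝ)
    (T ν : MTree N) (r : ℕ) : ℝ :=
  ∑ j : Fin (Rpar R T ν), (went R W ν r (j : ℕ)) ^ 2

/-- `σ^(ν,r)` : the norm of the `(ν,r)`'th local component, i.e. the product of the
norms of the vectors in `LC(ν,r)` (the `r`'th row of `W^(ν)` together with the `r`'th
columns of the weight matrices of the children of `ν`). -/
noncomputable def sigmaLoc (R : MTree N → ℕ) (W : ∀ ν : MTree N, Fin (R ν) → ℕ → ℝ)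
    (T ν : MTree N) (r : ℕ) : ℝ :=
  Real.sqrt (rowSq R W T ν r) * (ν.children.map fun c => Real.sqrt (colSq R W c r)).prod

/-- `PadR_r(W^(ν)_{r,:})` : the matrix whose `r`'th row is the `r`'th row of `W^(ν)`
and whose other rows are zero. -/
noncomputable def padRow (R : MTree N → ℕ) (W : ∀ ν : MTree N, Fin (R ν) → ℕ → ℝ)
    (ν : MTree N) (r : ℕ) : Fin (R ν) → ℕ → ℝ :=
  fun i j => if (i : ℕ) = r then W ν i j else 0

/-- `PadC_r(W^(c)_{:,r})` : the matrix whose `r`'th column is the `r`'th column of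
`W^(c)` and whose other columns are zero. -/
noncomputable def padCol (R : MTree N → ℕ) (W : ∀ ν : MTree N, Fin (R ν) → ℕ → ℝ)
    (c : MTree N) (r : ℕ) : Fin (R c) → ℕ → ℝ :=
  fun i j => if j = r then W c i r else 0

/-- `Ĉ^(ν,r)` : the end tensor obtained by normalizing the `r`'th local component at
`ν` and setting all other local components at `ν` to zero, i.e. the end tensor computed
with `W^(ν)` replaced by `σ^{-1} · PadR_r(W^(ν)_{r,:})` (and `0` if `σ^(ν,r) = 0`). -/
noncomputable def hatC (R : MTree N → ℕ) (W : ∀ ν : MTree N, Fin (R ν) → ℕ → ℝ)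
    (T ν : MTree N) (r : ℕ) : Idx D → ℝ :=
  if sigmaLoc R W T ν r = 0 then 0
  else endT D R (replace R W ν fun i j =>
    if (i : ℕ) = r then (sigmaLoc R W T ν r)⁻¹ * W ν i j else 0) T

/-- The objective `φ_H = L_H ∘ (end tensor)`. -/
noncomputable def obj (L : (Idx D → ℝ) → ℝ) (R : MTree N → ℕ) (T : MTree N)
    (W : ∀ ν : MTree N, Fin (R ν) → ℕ → ℝ) : ℝ :=
  L (endT D R W T)

/-- Update the single entry `(i, j)` of the weight matrix at node `μ` to the value `s`. -/
noncomputable def upd (R : MTree N → ℕ) (W : ∀ ν : MTree N, Fin (R ν) → ℕ → ℝ)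
    (μ : MTree N) (i j : ℕ) (s : ℝ) : ∀ ν : MTree N, Fin (R ν) → ℕ → ℝ :=
  fun ν i' j' => if ν = μ ∧ (i' : ℕ) = i ∧ j' = j then s else W ν i' j'

/-- `∂φ_H/∂W^(μ)_{i,j}` : the partial derivative of the objective with respect to the
`(i,j)` entry of the weight matrix at node `μ`, at the point `W`. -/
noncomputable def dObj (L : (Idx D → ℝ) → ℝ) (R : MTree N → ℕ) (T : MTree N)
    (W : ∀ ν : MTree N, Fin (R ν) → ℕ → ℝ) (μ : MTree N) (i j : ℕ) : ℝ :=
  deriv (fun s : ℝ => obj D L R T (upd R W μ i j s)) (went R W μ i j)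

/-- `∇L(A)` : the gradient of a loss over tensors, entrywise. -/
noncomputable def tgrad (L : (Idx D → ℝ) → ℝ) (A : Idx D → ℝ) : Idx D → ℝ :=
  fun x => deriv (fun s : ℝ => L (Function.update A x s)) (A x)

/-- Local smoothness of the loss: its gradient is Lipschitz on compact sets. -/
def LocSmooth (L : (Idx D → ℝ) → ℝ) : Prop :=
  ∀ K : Set (Idx D → ℝ), IsCompact K → ∃ β : NNReal, LipschitzOnWith β (tgrad D L) K

/-- Gradient flow over the objective: each entry of each weight matrix moves against
its partial derivative. -/
def GradFlow (L : (Idx D → ℝ) → ℝ) (R : MTree N → ℕ) (T : MTree N)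
    (Wt : ℝ → ∀ ν : MTree N, Fin (R ν) → ℕ → ℝ) : Prop :=
  ∀ (ν : MTree N) (i : Fin (R ν)) (j : ℕ) (t : ℝ), 0 ≤ t →
    HasDerivAt (fun s : ℝ => Wt s ν i j) (- dObj D L R T (Wt t) ν (i : ℕ) j) t

/-- The matricization of an order-`N` tensor according to the index set `I` : the
matrix whose rows are indexed by the modes in `I` and whose columns are indexed by the
remaining modes. -/
noncomputable def matricize (I : Finset (Fin N)) (A : Idx D → ℝ) :
    Matrix (∀ i : {n // n ∈ I}, Fin (D i)) (∀ j : {n // n ∉ I}, Fin (D j)) ℝ :=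
  fun ρ κ => A fun n => if h : n ∈ I then ρ ⟨n, h⟩ else κ ⟨n, h⟩

/-- Frobenius norm of the weight matrix `W^(ν) ∈ ℝ^{R_ν × R_{Pa(ν)}}` at node `ν` of `T`. -/
noncomputable def wFro (R : MTree N → ℕ) (W : ∀ ν : MTree N, Fin (R ν) → ℕ → ℝ)
    (T ν : MTree N) : ℝ :=
  Real.sqrt (∑ i : Fin (R ν), ∑ j : Fin (Rpar R T ν), (W ν i (j : ℕ)) ^ 2)

/-- The weights obtained by pruning the `(ν,r)`'th local component: the `r`'th row of
`W^(ν)` and the `r`'th column of `W^(c)` for every child `c` of `ν` are set to zero. -/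
noncomputable def pruneLC (R : MTree N → ℕ) (W : ∀ ν : MTree N, Fin (R ν) → ℕ → ℝ)
    (ν : MTree N) (r : ℕ) : ∀ μ : MTree N, Fin (R μ) → ℕ → ℝ :=
  fun μ i j =>
    if μ = ν ∧ (i : ℕ) = r then 0
    else if μ ∈ ν.children ∧ j = r then 0
    else W μ i j

end HTF

/-!
Let `g(t)` be the squared norm of the coordinates of `LC(ν,r)` at time `t`. If all vectors of
`LC(ν,r)` but one vanish, the `(ν,r)`'th term of every `W^(ν,·)` is a product with a zero factor,
so moving the remaining vector does not change the end tensor. Hence every partial derivative of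
`φ_H` along `LC(ν,r)` vanishes on the subspace where the local component is zero. These partial
derivatives are sums of (smooth) partial derivatives of the end tensor times entries of `∇L`,
which is bounded on compact sets, so along a bounded stretch of the trajectory they are
`O(√g)`. Thus `|g'| ≤ K g`, and Grönwall's inequality, run forwards and backwards from `t₀`,
gives `g ≡ 0`.
-/

open Set

theorem List.findSome?_eq_some_of_unique {α β : Type*} {l : List α} {f : α → Option β} {b : β}
    (hex : ∃ a ∈ l, f a = some b) (huniq : ∀ a ∈ l, ∀ b', f a = some b' → b' = b) :
    l.findSome? f = some b := by
  obtain ⟨a, ha, hfa⟩ := hex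
  obtain ⟨b', hb'⟩ := Option.isSome_iff_exists.1
    (List.findSome?_isSome_iff (f := f).2 ⟨a, ha, by rw [hfa]; rfl⟩)
  obtain ⟨a', ha', hfa'⟩ := List.exists_of_findSome?_eq_some hb'
  rw [hb', huniq a' ha' b' hfa']

theorem contDiff_list_prod_map {𝕜 E 𝔸 ι : Type*} [NontriviallyNormedField 𝕜]
    [NormedAddCommGroup E] [NormedSpace 𝕜 E] [NormedRing 𝔸] [NormedAlgebra 𝕜 𝔸]
    {n : WithTop ℕ∞} {f : ι → E → 𝔸} :
    ∀ l : List ι, (∀ i ∈ l, ContDiff 𝕜 n (f i)) → ContDiff 𝕜 n fun x => (l.map (f · x)).prod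
  | [], _ => by simpa using contDiff_const
  | i :: l, h => by
    simpa using (h i List.mem_cons_self).mul
      (contDiff_list_prod_map l fun j hj => h j (List.mem_cons_of_mem _ hj))

section Calculus

variable {E F : Type*} [NormedAddCommGroup E] [NormedSpace ℝ E] [NormedAddCommGroup F]
  [NormedSpace ℝ F]

theorem deriv_add_sub_smul_eq_fderiv {f : E → F} {a : E} (hf : DifferentiableAt ℝ f a)
    (u : E) (s₀ : ℝ) :
    deriv (fun s => f (a + (s - s₀) • u)) s₀ = fderiv ℝ f a u := by
  have hline : HasDerivAt (fun s : ℝ => a + (s - s₀) • u) u s₀ := by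
    simpa using (((hasDerivAt_id s₀).sub_const s₀).smul_const u).const_add a
  exact (hf.hasFDerivAt.comp_hasDerivAt_of_eq s₀ hline (by simp)).deriv

theorem fderiv_apply_eq_zero_of_forall_add_smul_eq {f : E → F} {a e : E}
    (hf : DifferentiableAt ℝ f a) (h : ∀ s : ℝ, f (a + s • e) = f a) : fderiv ℝ f a e = 0 := by
  rw [← deriv_add_sub_smul_eq_fderiv hf e 0]
  simp [h]

theorem eq_zero_of_norm_deriv_le_mul_norm {f f' : ℝ → E} {K a b t₀ : ℝ}
    (hf : ∀ s ∈ Icc a b, HasDerivAt f (f' s) s)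
    (bound : ∀ s ∈ Icc a b, ‖f' s‖ ≤ K * ‖f s‖) (ht₀ : t₀ ∈ Icc a b) (h0 : f t₀ = 0) :
    ∀ t ∈ Icc a b, f t = 0 := by
  intro t ht
  rcases le_total t₀ t with h | h
  · have hmem : ∀ s ∈ Icc t₀ b, s ∈ Icc a b := fun s hs => ⟨ht₀.1.trans hs.1, hs.2⟩
    exact eq_zero_of_abs_deriv_le_mul_abs_self_of_eq_zero_right
      (fun s hs => (hf s (hmem s hs)).continuousAt.continuousWithinAt)
      (fun s hs => (hf s (hmem s (Ico_subset_Icc_self hs))).hasDerivWithinAt) h0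
      (fun s hs => bound s (hmem s (Ico_subset_Icc_self hs))) t ⟨h, ht.2⟩
  · have hmem : ∀ s ∈ Icc (-t₀) (-a), -s ∈ Icc a b := fun s hs =>
      ⟨le_neg_of_le_neg hs.2, (neg_le.1 hs.1).trans ht₀.2⟩
    have hrev : ∀ s ∈ Icc (-t₀) (-a), HasDerivAt (fun s => f (-s)) (-f' (-s)) s := fun s hs => by
      simpa [Function.comp_def] using (hf (-s) (hmem s hs)).scomp s (hasDerivAt_neg s)
    simpa using eq_zero_of_abs_deriv_le_mul_abs_self_of_eq_zero_right (K := K)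
      (fun s hs => (hrev s hs).continuousAt.continuousWithinAt)
      (fun s hs => (hrev s (Ico_subset_Icc_self hs)).hasDerivWithinAt) (by simpa using h0)
      (fun s hs => by simpa using bound (-s) (hmem s (Ico_subset_Icc_self hs)))
      (-t) ⟨neg_le_neg h, neg_le_neg ht.1⟩

end Calculus

theorem abs_le_sqrt_sum_sq {ι : Type*} (Q : Finset ι) (v : ι → ℝ) {q : ι} (hq : q ∈ Q) :
    |v q| ≤ √(∑ p ∈ Q, v p ^ 2) := by
  rw [← Real.sqrt_sq_eq_abs]
  exact Real.sqrt_le_sqrt (Finset.single_le_sum (fun p _ => sq_nonneg (v p)) hq)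

theorem norm_sub_piecewise_zero_le {ι : Type*} [Fintype ι] [DecidableEq ι] (Q : Finset ι)
    (v : ι → ℝ) : ‖v - Q.piecewise (0 : ι → ℝ) v‖ ≤ √(∑ p ∈ Q, v p ^ 2) := by
  refine (pi_norm_le_iff_of_nonneg (Real.sqrt_nonneg _)).2 fun q => ?_
  by_cases hq : q ∈ Q
  · simpa [Finset.piecewise_eq_of_mem _ _ _ hq] using abs_le_sqrt_sum_sq Q v hq
  · simp [Finset.piecewise_eq_of_notMem _ _ _ hq]

theorem norm_piecewise_zero_le {ι : Type*} [Fintype ι] [DecidableEq ι] (Q : Finset ι)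
    (v : ι → ℝ) : ‖Q.piecewise (0 : ι → ℝ) v‖ ≤ ‖v‖ := by
  refine (pi_norm_le_iff_of_nonneg (norm_nonneg v)).2 fun q => ?_
  by_cases hq : q ∈ Q
  · simp [Finset.piecewise_eq_of_mem _ _ _ hq]
  · simpa [Finset.piecewise_eq_of_notMem _ _ _ hq] using norm_le_pi_norm v q

theorem abs_sum_mul_le {ι : Type*} (s : Finset ι) {f g : ι → ℝ} {a b : ℝ}
    (hf : ∀ i ∈ s, |f i| ≤ a) (hg : ∀ i ∈ s, |g i| ≤ b) :
    |∑ i ∈ s, f i * g i| ≤ s.card * (a * b) := by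
  calc |∑ i ∈ s, f i * g i| ≤ ∑ i ∈ s, |f i| * |g i| := by
        simpa only [abs_mul] using Finset.abs_sum_le_sum_abs (fun i => f i * g i) s
    _ ≤ ∑ _i ∈ s, a * b := Finset.sum_le_sum fun i hi =>
        mul_le_mul (hf i hi) (hg i hi) (abs_nonneg _) ((abs_nonneg _).trans (hf i hi))
    _ = s.card * (a * b) := by rw [Finset.sum_const, nsmul_eq_mul]

theorem eq_zero_of_abs_deriv_le_mul_norm_sub_piecewise {ι : Type*} [Fintype ι] [DecidableEq ι]
    (Q : Finset ι) {v w : ℝ → ι → ℝ} {C a b t₀ : ℝ}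
    (hv : ∀ q ∈ Q, ∀ s ∈ Icc a b, HasDerivAt (fun s => v s q) (w s q) s)
    (hw : ∀ q ∈ Q, ∀ s ∈ Icc a b, |w s q| ≤ C * ‖v s - Q.piecewise (0 : ι → ℝ) (v s)‖)
    (ht₀ : t₀ ∈ Icc a b) (h0 : ∀ q ∈ Q, v t₀ q = 0) :
    ∀ t ∈ Icc a b, ∀ q ∈ Q, v t q = 0 := by
  set g : ℝ → ℝ := fun s => ∑ q ∈ Q, v s q ^ 2
  have hg_nonneg : ∀ s, 0 ≤ g s := fun s => Finset.sum_nonneg fun q _ => sq_nonneg _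
  have hg : ∀ s ∈ Icc a b, HasDerivAt g (2 * ∑ q ∈ Q, v s q * w s q) s := fun s hs => by
    rw [Finset.mul_sum]
    refine HasDerivAt.fun_sum fun q hq => ((hv q hq s hs).pow 2).congr_deriv ?_
    ring
  have hbound : ∀ s ∈ Icc a b,
      ‖2 * ∑ q ∈ Q, v s q * w s q‖ ≤ (2 * Q.card * max C 0 : ℝ) * ‖g s‖ := fun s hs => by
    have hw' : ∀ q ∈ Q, |w s q| ≤ max C 0 * √(g s) := fun q hq =>
      calc |w s q| ≤ C * ‖v s - Q.piecewise (0 : ι → ℝ) (v s)‖ := hw q hq s hs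
        _ ≤ max C 0 * ‖v s - Q.piecewise (0 : ι → ℝ) (v s)‖ := by gcongr; exact le_max_left C 0
        _ ≤ max C 0 * √(g s) := by gcongr; exact norm_sub_piecewise_zero_le Q (v s)
    have hsum := abs_sum_mul_le Q (fun q hq => abs_le_sqrt_sum_sq Q (v s) hq) hw'
    rw [Real.norm_eq_abs, Real.norm_eq_abs, abs_mul, abs_two, abs_of_nonneg (hg_nonneg s)]
    calc 2 * |∑ q ∈ Q, v s q * w s q| ≤ 2 * (Q.card * (√(g s) * (max C 0 * √(g s)))) :=
          mul_le_mul_of_nonneg_left hsum zero_le_two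
      _ = 2 * Q.card * max C 0 * (√(g s) * √(g s)) := by ring
      _ = 2 * Q.card * max C 0 * g s := by rw [Real.mul_self_sqrt (hg_nonneg s)]
  have hgt := eq_zero_of_norm_deriv_le_mul_norm hg hbound ht₀
    (Finset.sum_eq_zero fun q hq => by simp [h0 q hq])
  intro t ht q hq
  exact pow_eq_zero_iff two_ne_zero |>.1 <|
    (Finset.sum_eq_zero_iff_of_nonneg fun p _ => sq_nonneg (v t p)).1 (hgt t ht) q hq

namespace HTF

namespace MTree

variable {N : ℕ}

theorem mem_nodes_self (t : MTree N) : t ∈ t.nodes := by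
  cases t <;> simp [nodes]

theorem sizeOf_le_of_mem_nodes : ∀ (t u : MTree N), u ∈ t.nodes → sizeOf u ≤ sizeOf t
  | .leaf i, u, h => by
    rw [nodes, List.mem_singleton] at h; subst h; exact le_refl _
  | .node ts, u, h => by
    rw [nodes] at h
    rcases List.mem_cons.1 h with h | h
    · subst h; exact le_refl _
    · obtain ⟨a, -, hcn⟩ := List.mem_flatMap.1 h
      have h1 := sizeOf_le_of_mem_nodes a.1 u hcn
      have h2 := List.sizeOf_lt_of_mem a.2
      simp only [MTree.node.sizeOf_spec]
      omega
termination_by t => sizeOf t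
decreasing_by have := List.sizeOf_lt_of_mem a.2; simp only [MTree.node.sizeOf_spec]; omega

theorem eq_or_sizeOf_lt_of_mem_nodes {t u : MTree N} (h : u ∈ t.nodes) :
    u = t ∨ sizeOf u < sizeOf t := by
  cases t with
  | leaf i => rw [nodes, List.mem_singleton] at h; exact Or.inl h
  | node ts =>
    rw [nodes] at h
    rcases List.mem_cons.1 h with h | h
    · exact Or.inl h
    · obtain ⟨a, -, hcn⟩ := List.mem_flatMap.1 h
      have h1 := sizeOf_le_of_mem_nodes a.1 u hcn
      have h2 := List.sizeOf_lt_of_mem a.2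
      right; simp only [MTree.node.sizeOf_spec]; omega

theorem sizeOf_lt_of_mem_children {t u : MTree N} (h : u ∈ t.children) :
    sizeOf u < sizeOf t := by
  cases t with
  | leaf i => simp [children] at h
  | node ts =>
    have := List.sizeOf_lt_of_mem (show u ∈ ts from h)
    simp only [MTree.node.sizeOf_spec]; omega

theorem mem_nodes_of_mem_children {t u : MTree N} (h : u ∈ t.children) : u ∈ t.nodes := by
  cases t with
  | leaf i => simp [children] at h
  | node ts =>
    rw [nodes]
    exact List.mem_cons.2 (Or.inr
      (List.mem_flatMap.2 ⟨⟨u, h⟩, List.mem_attach _ _, mem_nodes_self u⟩))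

theorem mem_nodes_trans :
    ∀ (s : MTree N) {t u : MTree N}, u ∈ t.nodes → t ∈ s.nodes → u ∈ s.nodes
  | .leaf i, t, u, h1, h2 => by
    rw [nodes, List.mem_singleton] at h2; subst h2; exact h1
  | .node ts, t, u, h1, h2 => by
    rw [nodes] at h2 ⊢
    rcases List.mem_cons.1 h2 with h2 | h2
    · subst h2; rw [nodes] at h1; exact h1
    · obtain ⟨a, ha, hcn⟩ := List.mem_flatMap.1 h2
      exact List.mem_cons.2 (Or.inr (List.mem_flatMap.2 ⟨a, ha, mem_nodes_trans a.1 h1 hcn⟩))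
termination_by s => sizeOf s
decreasing_by have := List.sizeOf_lt_of_mem a.2; simp only [MTree.node.sizeOf_spec]; omega

theorem mem_nodes_of_mem_children_of_mem_nodes {s t u : MTree N} (hu : u ∈ t.children)
    (ht : t ∈ s.nodes) : u ∈ s.nodes :=
  mem_nodes_trans s (mem_nodes_of_mem_children hu) ht

theorem mem_leafList_of_mem_nodes :
    ∀ (t : MTree N) {u : MTree N}, u ∈ t.nodes → ∀ a ∈ u.leafList, a ∈ t.leafList
  | .leaf i, u, h => by
    rw [nodes, List.mem_singleton] at h; subst h; exact fun a ha => ha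
  | .node ts, u, h => by
    rw [nodes] at h
    rcases List.mem_cons.1 h with h | h
    · subst h; exact fun a ha => ha
    · obtain ⟨c, -, hcn⟩ := List.mem_flatMap.1 h
      intro a ha
      rw [leafList]
      exact List.mem_flatMap.2 ⟨c, List.mem_attach _ _, mem_leafList_of_mem_nodes c.1 hcn a ha⟩
termination_by t => sizeOf t
decreasing_by have := List.sizeOf_lt_of_mem c.2; simp only [MTree.node.sizeOf_spec]; omega

theorem branching_of_mem_nodes :
    ∀ (t : MTree N) {u : MTree N}, t.Branching → u ∈ t.nodes → u.Branching
  | .leaf i, u, hb, h => by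
    rw [nodes, List.mem_singleton] at h; subst h; exact hb
  | .node ts, u, hb, h => by
    rw [nodes] at h
    rcases List.mem_cons.1 h with h | h
    · subst h; exact hb
    · obtain ⟨c, -, hcn⟩ := List.mem_flatMap.1 h
      rw [Branching] at hb
      exact branching_of_mem_nodes c.1 (hb.2 c (List.mem_attach _ _)) hcn
termination_by t => sizeOf t
decreasing_by have := List.sizeOf_lt_of_mem c.2; simp only [MTree.node.sizeOf_spec]; omega

theorem leafList_ne_nil : ∀ (t : MTree N), t.Branching → t.leafList ≠ []
  | .leaf i, _ => by simp [leafList]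
  | .node ts, hb => by
    rw [Branching] at hb
    obtain ⟨c, hc⟩ := List.exists_mem_of_ne_nil _ hb.1
    obtain ⟨a, ha⟩ :=
      List.exists_mem_of_ne_nil _ (leafList_ne_nil c (hb.2 ⟨c, hc⟩ (List.mem_attach _ _)))
    rw [leafList]
    exact List.ne_nil_of_mem (List.mem_flatMap.2 ⟨⟨c, hc⟩, List.mem_attach _ _, ha⟩)
termination_by t => sizeOf t
decreasing_by have := List.sizeOf_lt_of_mem hc; simp only [MTree.node.sizeOf_spec]; omega

theorem nodup_leafList_of_mem {ts : List (MTree N)}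
    (hn : (MTree.node ts : MTree N).leafList.Nodup) {c : MTree N} (hc : c ∈ ts) :
    c.leafList.Nodup := by
  rw [leafList] at hn
  exact (List.nodup_flatMap.1 hn).1 ⟨c, hc⟩ (List.mem_attach _ _)

theorem disjoint_leafList_of_mem {ts : List (MTree N)}
    (hn : (MTree.node ts : MTree N).leafList.Nodup) {c c' : MTree N}
    (hc : c ∈ ts) (hc' : c' ∈ ts) (hne : c ≠ c') :
    c.leafList.Disjoint c'.leafList := by
  rw [leafList] at hn
  have : Std.Symm (Function.onFun List.Disjoint fun t : {x // x ∈ ts} => t.1.leafList) :=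
    ⟨fun _ _ h => h.symm⟩
  exact (List.nodup_flatMap.1 hn).2.forall (List.mem_attach _ ⟨c, hc⟩)
    (List.mem_attach _ ⟨c', hc'⟩) (fun h => hne (congrArg Subtype.val h))

theorem nodup_leafList_of_mem_nodes : ∀ (t : MTree N) {u : MTree N},
    t.leafList.Nodup → u ∈ t.nodes → u.leafList.Nodup
  | .leaf i, u, hn, h => by
    rw [nodes, List.mem_singleton] at h; subst h; exact hn
  | .node ts, u, hn, h => by
    rw [nodes] at h
    rcases List.mem_cons.1 h with h | h
    · subst h; exact hn
    · obtain ⟨c, -, hcn⟩ := List.mem_flatMap.1 h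
      exact nodup_leafList_of_mem_nodes c.1 (nodup_leafList_of_mem hn c.2) hcn
termination_by t => sizeOf t
decreasing_by have := List.sizeOf_lt_of_mem c.2; simp only [MTree.node.sizeOf_spec]; omega

theorem eq_of_mem_nodes_of_mem_nodes {ts : List (MTree N)}
    (hn : (MTree.node ts : MTree N).leafList.Nodup)
    (hb : (MTree.node ts : MTree N).Branching) {c c' u : MTree N}
    (hc : c ∈ ts) (hc' : c' ∈ ts) (hu : u ∈ c.nodes) (hu' : u ∈ c'.nodes) : c = c' := by
  by_contra hne
  rw [Branching] at hb
  have hub : u.Branching := branching_of_mem_nodes c (hb.2 ⟨c, hc⟩ (List.mem_attach _ _)) hu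
  obtain ⟨a, ha⟩ := List.exists_mem_of_ne_nil _ (leafList_ne_nil u hub)
  exact disjoint_leafList_of_mem hn hc hc' hne (mem_leafList_of_mem_nodes c hu a ha)
    (mem_leafList_of_mem_nodes c' hu' a ha)

theorem mem_nodes_and_mem_children_of_parentIn_eq_some : ∀ (t : MTree N) {u p : MTree N},
    parentIn t u = some p → p ∈ t.nodes ∧ u ∈ p.children
  | .leaf i, u, p, h => by rw [parentIn] at h; exact absurd h (by simp)
  | .node ts, u, p, h => by
    rw [parentIn] at h
    split at h
    · obtain rfl := Option.some.inj h
      exact ⟨mem_nodes_self _, by rw [children]; assumption⟩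
    · obtain ⟨a, -, hsome⟩ := List.exists_of_findSome?_eq_some h
      have hrec := mem_nodes_and_mem_children_of_parentIn_eq_some a.1 hsome
      exact ⟨mem_nodes_trans _ hrec.1
        (mem_nodes_of_mem_children (t := MTree.node ts) (by rw [children]; exact a.2)), hrec.2⟩
termination_by t => sizeOf t
decreasing_by have := List.sizeOf_lt_of_mem a.2; simp only [MTree.node.sizeOf_spec]; omega

theorem parentIn_eq_of_mem_children : ∀ (t : MTree N), t.leafList.Nodup → t.Branching →
    ∀ {p u : MTree N}, p ∈ t.nodes → u ∈ p.children → parentIn t u = some p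
  | .leaf i, _, _, p, u, hp, hu => by
    rw [nodes, List.mem_singleton] at hp; subst hp; simp [children] at hu
  | .node ts, hn, hb, p, u, hp, hu => by
    rw [nodes] at hp
    rw [parentIn]
    rcases List.mem_cons.1 hp with hp | hp
    · subst hp
      rw [if_pos (show u ∈ ts by rw [children] at hu; exact hu)]
    · obtain ⟨c, -, hpc⟩ := List.mem_flatMap.1 hp
      have hbranch : (MTree.node ts : MTree N).Branching := hb
      rw [Branching] at hb
      have hcbr : c.1.Branching := hb.2 c (List.mem_attach _ _)
      have hu_nodes : u ∈ c.1.nodes := mem_nodes_of_mem_children_of_mem_nodes hu hpc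
      have hnotin : u ∉ ts := by
        intro hmem
        rcases eq_or_ne u c.1 with heq | hne
        · have h1 : sizeOf u < sizeOf p := sizeOf_lt_of_mem_children hu
          have h2 : sizeOf p ≤ sizeOf c.1 := sizeOf_le_of_mem_nodes c.1 p hpc
          rw [heq] at h1; omega
        · obtain ⟨a, ha⟩ := List.exists_mem_of_ne_nil _
            (leafList_ne_nil u (branching_of_mem_nodes c.1 hcbr hu_nodes))
          exact disjoint_leafList_of_mem hn hmem c.2 hne ha
            (mem_leafList_of_mem_nodes c.1 hu_nodes a ha)
      rw [if_neg hnotin]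
      have hparc : parentIn c.1 u = some p :=
        parentIn_eq_of_mem_children c.1 (nodup_leafList_of_mem hn c.2) hcbr hpc hu
      refine List.findSome?_eq_some_of_unique ⟨c, List.mem_attach _ _, hparc⟩ ?_
      intro a _ p' hp'
      obtain ⟨hp'nodes, hu'⟩ := mem_nodes_and_mem_children_of_parentIn_eq_some a.1 hp'
      have hac : a.1 = c.1 := eq_of_mem_nodes_of_mem_nodes hn hbranch a.2 c.2
        (mem_nodes_of_mem_children_of_mem_nodes hu' hp'nodes) hu_nodes
      rw [hac] at hp'
      exact Option.some.inj (hp'.symm.trans hparc)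
termination_by t => sizeOf t
decreasing_by have := List.sizeOf_lt_of_mem c.2; simp only [MTree.node.sizeOf_spec]; omega

end MTree

open MTree

theorem Rpar_root {N : ℕ} (R : MTree N → ℕ) (T : MTree N) : Rpar R T T = 1 := if_pos rfl

theorem Rpar_eq_of_mem_children {N : ℕ} {T t c : MTree N} (R : MTree N → ℕ)
    (hT : T.Valid) (ht : t ∈ T.nodes) (hc : c ∈ t.children) : Rpar R T c = R t := by
  have hcT : c ≠ T := by
    have h1 := sizeOf_lt_of_mem_children hc
    have h2 := sizeOf_le_of_mem_nodes T t ht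
    rintro rfl; omega
  rw [Rpar, if_neg hcT, parentIn_eq_of_mem_children T hT.1 hT.2.2 ht hc]
  rfl

section Interm

variable {N : ℕ} (D : Fin N → ℕ) (R : MTree N → ℕ)

theorem interm_node (W : ∀ ν : MTree N, Fin (R ν) → ℕ → ℝ) (ts : List (MTree N)) (r : ℕ)
    (x : Idx D) :
    interm D R W (.node ts) r x =
      ∑ r' : Fin (R (.node ts)),
        W (.node ts) r' r * (ts.map fun c => interm D R W c (r' : ℕ) x).prod := by
  rw [interm]
  refine Finset.sum_congr rfl fun r' _ => ?_
  rw [List.attach_map_val (f := fun c => interm D R W c (↑r') x)]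

theorem interm_congr :
    ∀ (t : MTree N) (W W' : ∀ ν : MTree N, Fin (R ν) → ℕ → ℝ),
    (∀ u ∈ t.nodes, W u = W' u) → ∀ (r : ℕ) (x : Idx D),
      interm D R W t r x = interm D R W' t r x
  | .leaf i, W, W', h, r, x => by
    rw [interm, interm, h _ (mem_nodes_self _)]
  | .node ts, W, W', h, r, x => by
    rw [interm_node, interm_node, h _ (mem_nodes_self _)]
    refine Finset.sum_congr rfl fun r' _ => ?_
    congr 1
    refine congrArg List.prod (List.map_congr_left fun c hc => ?_)
    exact interm_congr c W W' (fun u hu => h u (mem_nodes_trans _ hu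
        (mem_nodes_of_mem_children (t := MTree.node ts) (by rw [children]; exact hc)))) r' x
termination_by t => sizeOf t
decreasing_by have := List.sizeOf_lt_of_mem hc; simp only [MTree.node.sizeOf_spec]; omega

theorem interm_eq_zero_of_col_eq_zero (W : ∀ ν : MTree N, Fin (R ν) → ℕ → ℝ) (c : MTree N)
    {a : ℕ} (h : ∀ i : Fin (R c), W c i a = 0) (x : Idx D) : interm D R W c a x = 0 := by
  cases c with
  | leaf i =>
    rw [interm]
    split
    · exact h _
    · rfl
  | node ts =>
    rw [interm]
    exact Finset.sum_eq_zero fun r' _ => by rw [h r', zero_mul]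

theorem interm_congr_of_subtree :
    ∀ (t : MTree N) {T ν : MTree N} {W W' : ∀ ν : MTree N, Fin (R ν) → ℕ → ℝ},
    T.Valid → t ∈ T.nodes → ν ∈ t.nodes →
    (∀ (r : ℕ) (x : Idx D), interm D R W' ν r x = interm D R W ν r x) →
    (∀ μ, μ ∉ ν.nodes → W' μ = W μ) →
    ∀ (r : ℕ) (x : Idx D), interm D R W' t r x = interm D R W t r x
  | .leaf i, T, ν, W, W', _, _, hν, h1, _, r, x => by
    rw [nodes, List.mem_singleton] at hν; subst hν
    exact h1 r x
  | .node ts, T, ν, W, W', hT, ht, hν, h1, h2, r, x => by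
    by_cases htν : MTree.node ts = ν
    · subst htν; exact h1 r x
    have hn : (MTree.node ts : MTree N).leafList.Nodup := nodup_leafList_of_mem_nodes T hT.1 ht
    have hb : (MTree.node ts : MTree N).Branching := branching_of_mem_nodes T hT.2.2 ht
    have hν' := hν
    rw [nodes] at hν
    rcases List.mem_cons.1 hν with hν | hν
    · exact absurd hν.symm htν
    obtain ⟨c₁, -, hν₁⟩ := List.mem_flatMap.1 hν
    have hroot : W' (MTree.node ts) = W (MTree.node ts) := by
      refine h2 _ fun hmem => ?_
      rcases eq_or_sizeOf_lt_of_mem_nodes hmem with h | h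
      · exact htν h
      rcases eq_or_sizeOf_lt_of_mem_nodes hν' with h' | h'
      · exact htν h'.symm
      omega
    rw [interm_node, interm_node, hroot]
    refine Finset.sum_congr rfl fun r' _ => ?_
    congr 1
    refine congrArg List.prod (List.map_congr_left fun c hc => ?_)
    have hcT : c ∈ T.nodes :=
      mem_nodes_of_mem_children_of_mem_nodes (t := MTree.node ts) (by rw [children]; exact hc) ht
    by_cases hνc : ν ∈ c.nodes
    · exact interm_congr_of_subtree c hT hcT hνc h1 h2 _ x
    · refine interm_congr D R c W' W (fun u hu => h2 u fun huν => ?_) _ x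
      rcases eq_or_ne c c₁.1 with rfl | hne
      · exact hνc hν₁
      · exact hne (eq_of_mem_nodes_of_mem_nodes hn hb hc c₁.2 hu (mem_nodes_trans _ huν hν₁))
termination_by t => sizeOf t
decreasing_by have := List.sizeOf_lt_of_mem hc; simp only [MTree.node.sizeOf_spec]; omega

theorem endT_congr_of_subtree {T ν : MTree N} {W W' : ∀ ν : MTree N, Fin (R ν) → ℕ → ℝ}
    (hT : T.Valid) (hν : ν ∈ T.nodes)
    (h1 : ∀ (r : ℕ) (x : Idx D), interm D R W' ν r x = interm D R W ν r x)
    (h2 : ∀ μ, μ ∉ ν.nodes → W' μ = W μ) :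
    endT D R W' T = endT D R W T :=
  funext fun x => interm_congr_of_subtree D R T hT (mem_nodes_self T) hν h1 h2 0 x

theorem interm_congr_of_relevant :
    ∀ (t : MTree N) {T : MTree N} {W W' : ∀ ν : MTree N, Fin (R ν) → ℕ → ℝ},
    T.Valid → t ∈ T.nodes →
    (∀ μ ∈ T.nodes, ∀ (i : Fin (R μ)) (j : ℕ), j < Rpar R T μ → W μ i j = W' μ i j) →
    ∀ r, r < Rpar R T t → ∀ (x : Idx D), interm D R W t r x = interm D R W' t r x
  | .leaf m, T, W, W', _, ht, hag, r, hr, x => by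
    rw [interm, interm]
    split
    · exact hag _ ht _ r hr
    · rfl
  | .node ts, T, W, W', hT, ht, hag, r, hr, x => by
    rw [interm_node, interm_node]
    refine Finset.sum_congr rfl fun r' _ => ?_
    rw [hag _ ht r' r hr]
    congr 1
    refine congrArg List.prod (List.map_congr_left fun c hc => ?_)
    have hcch : c ∈ (MTree.node ts : MTree N).children := by rw [children]; exact hc
    refine interm_congr_of_relevant c hT (mem_nodes_of_mem_children_of_mem_nodes hcch ht) hag r'
      ?_ x
    rw [Rpar_eq_of_mem_children R hT ht hcch]
    exact r'.isLt
termination_by t => sizeOf t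
decreasing_by have := List.sizeOf_lt_of_mem hc; simp only [MTree.node.sizeOf_spec]; omega

theorem endT_congr_of_relevant {T : MTree N} {W W' : ∀ ν : MTree N, Fin (R ν) → ℕ → ℝ}
    (hT : T.Valid)
    (hag : ∀ μ ∈ T.nodes, ∀ (i : Fin (R μ)) (j : ℕ), j < Rpar R T μ → W μ i j = W' μ i j) :
    endT D R W T = endT D R W' T :=
  funext fun x =>
    interm_congr_of_relevant D R T hT (mem_nodes_self T) hag 0 (by rw [Rpar_root]; omega) x

end Interm

section Update

variable {N : ℕ} (D : Fin N → ℕ) (R : MTree N → ℕ)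

theorem upd_of_ne (W : ∀ ν : MTree N, Fin (R ν) → ℕ → ℝ) {μ μ' : MTree N} (i j : ℕ) (s : ℝ)
    (h : μ' ≠ μ) : upd R W μ i j s μ' = W μ' := by
  funext i' j'
  simp only [upd]
  rw [if_neg fun hc => h hc.1]

theorem interm_upd_of_sizeOf_lt (W : ∀ ν : MTree N, Fin (R ν) → ℕ → ℝ) {μ t : MTree N}
    (i j : ℕ) (s : ℝ) (h : sizeOf t < sizeOf μ) (r : ℕ) (x : Idx D) :
    interm D R (upd R W μ i j s) t r x = interm D R W t r x := by
  refine interm_congr D R t _ _ (fun u hu => upd_of_ne R W i j s fun he => ?_) r x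
  have := sizeOf_le_of_mem_nodes t u hu
  rw [he] at this
  omega

theorem interm_upd_self_of_ne (W : ∀ ν : MTree N, Fin (R ν) → ℕ → ℝ) (c : MTree N)
    (i a : ℕ) (s : ℝ) {b : ℕ} (hb : b ≠ a) (x : Idx D) :
    interm D R (upd R W c i a s) c b x = interm D R W c b x := by
  have hentry : ∀ i', upd R W c i a s c i' b = W c i' b := fun i' => by
    simp only [upd]
    rw [if_neg fun hc => hb hc.2.2]
  cases c with
  | leaf m =>
    rw [interm, interm]
    split
    · exact hentry _
    · rfl
  | node ts =>
    rw [interm_node, interm_node]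
    refine Finset.sum_congr rfl fun r' _ => ?_
    rw [hentry]
    congr 1
    refine congrArg List.prod (List.map_congr_left fun c hc => ?_)
    exact interm_upd_of_sizeOf_lt D R W i a s
      (sizeOf_lt_of_mem_children (t := MTree.node ts) (by rw [children]; exact hc)) _ x

theorem endT_upd_row_of_col_eq_zero {T ν : MTree N} (hT : T.Valid) (hν : ν ∈ T.nodes)
    (hint : ν.IsInterior) (W : ∀ ν : MTree N, Fin (R ν) → ℕ → ℝ) {a : ℕ}
    (hcol : ∀ c ∈ ν.children, ∀ i : Fin (R c), W c i a = 0) (j : ℕ) (s : ℝ) :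
    endT D R (upd R W ν a j s) T = endT D R W T := by
  cases ν with
  | leaf m => exact absurd hint not_false
  | node ts =>
    have hts : ts ≠ [] := by
      have hb := branching_of_mem_nodes T hT.2.2 hν
      rw [Branching] at hb
      exact hb.1
    refine endT_congr_of_subtree D R hT hν (fun r x => ?_)
      (fun μ hμ => upd_of_ne R W a j s fun he => hμ (he ▸ mem_nodes_self μ))
    rw [interm_node, interm_node]
    refine Finset.sum_congr rfl fun r' _ => ?_
    have hprod : (ts.map fun c => interm D R (upd R W (.node ts) a j s) c (r' : ℕ) x).prod
        = (ts.map fun c => interm D R W c (r' : ℕ) x).prod :=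
      congrArg List.prod (List.map_congr_left fun c hc => interm_upd_of_sizeOf_lt D R W a j s
        (sizeOf_lt_of_mem_children (t := MTree.node ts) (by rw [children]; exact hc)) _ x)
    rw [hprod]
    by_cases hcond : (r' : ℕ) = a ∧ r = j
    · obtain ⟨c₀, hc₀⟩ := List.exists_mem_of_ne_nil ts hts
      have hz : (ts.map fun c => interm D R W c (r' : ℕ) x).prod = 0 := by
        refine List.prod_eq_zero (List.mem_map.2 ⟨c₀, hc₀, ?_⟩)
        rw [hcond.1]
        exact interm_eq_zero_of_col_eq_zero D R W c₀ (hcol c₀ (by rw [children]; exact hc₀)) x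
      rw [hz, mul_zero, mul_zero]
    · congr 1
      simp only [upd]
      rw [if_neg fun hc => hcond ⟨hc.2.1, hc.2.2⟩]

theorem endT_upd_col_of_row_eq_zero {T ν : MTree N} (hT : T.Valid) (hν : ν ∈ T.nodes)
    (W : ∀ ν : MTree N, Fin (R ν) → ℕ → ℝ) {a : ℕ}
    (hrow : ∀ (i : Fin (R ν)) (j : ℕ), (i : ℕ) = a → W ν i j = 0)
    {c₀ : MTree N} (hc₀ : c₀ ∈ ν.children) (i : ℕ) (s : ℝ) :
    endT D R (upd R W c₀ i a s) T = endT D R W T := by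
  have hc₀ν : c₀ ∈ ν.nodes := mem_nodes_of_mem_children hc₀
  have hνc₀ : ν ≠ c₀ := fun he => by
    have := sizeOf_lt_of_mem_children hc₀
    rw [he] at this; omega
  cases ν with
  | leaf m => exact absurd hc₀ List.not_mem_nil
  | node ts =>
    have hn := nodup_leafList_of_mem_nodes T hT.1 hν
    have hb := branching_of_mem_nodes T hT.2.2 hν
    refine endT_congr_of_subtree D R hT hν (fun r x => ?_)
      (fun μ hμ => upd_of_ne R W i a s fun he => hμ (he ▸ hc₀ν))
    rw [interm_node, interm_node, upd_of_ne R W i a s hνc₀]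
    refine Finset.sum_congr rfl fun r' _ => ?_
    by_cases hra : (r' : ℕ) = a
    · rw [hrow r' r hra, zero_mul, zero_mul]
    · congr 1
      refine congrArg List.prod (List.map_congr_left fun c hc => ?_)
      rcases eq_or_ne c c₀ with rfl | hne
      · exact interm_upd_self_of_ne D R W c i a s hra x
      · refine interm_congr D R c _ _ (fun u hu => upd_of_ne R W i a s fun he => ?_) _ x
        subst he
        exact hne (eq_of_mem_nodes_of_mem_nodes hn hb hc hc₀ hu (mem_nodes_self u))

end Update

section Coordinates

variable {N : ℕ} (D : Fin N → ℕ) (R : MTree N → ℕ) (T : MTree N)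

/-- The entries `W^(μ)_{i,j}` with `μ ∈ T` and `j < R_{Pa(μ)}`, i.e. those that enter the
factorization: the weights themselves live on all of `MTree N × ℕ`, and `φ_H` is differentiated
on the finite-dimensional space `Coord R T → ℝ`. -/
abbrev Coord : Type :=
  Σ μ : {x : MTree N // x ∈ T.nodes.toFinset}, Fin (R μ.1) × Fin (Rpar R T μ.1)

noncomputable instance : DecidableEq (Coord R T) := Classical.decEq _

noncomputable def ofCoord (v : Coord R T → ℝ) : ∀ μ : MTree N, Fin (R μ) → ℕ → ℝ :=
  fun μ i j =>
    if h : μ ∈ T.nodes ∧ j < Rpar R T μ then v ⟨⟨μ, List.mem_toFinset.2 h.1⟩, i, ⟨j, h.2⟩⟩ else 0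

def toCoord (W : ∀ μ : MTree N, Fin (R μ) → ℕ → ℝ) : Coord R T → ℝ :=
  fun q => W q.1.1 q.2.1 q.2.2

theorem coord_mk_eq_iff {μ : MTree N} (hμ : μ ∈ T.nodes) (i : Fin (R μ)) {j : ℕ}
    (hj : j < Rpar R T μ) {μ' : MTree N} (hμ' : μ' ∈ T.nodes.toFinset)
    (i' : Fin (R μ')) (j' : Fin (Rpar R T μ')) :
    ((⟨⟨μ, List.mem_toFinset.2 hμ⟩, i, ⟨j, hj⟩⟩ : Coord R T) = ⟨⟨μ', hμ'⟩, i', j'⟩) ↔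
      (μ = μ' ∧ (i : ℕ) = i' ∧ j = j') := by
  constructor
  · intro h
    injection h with h1 h2
    obtain rfl : μ = μ' := congrArg Subtype.val h1
    have h2' : (⟨i, ⟨j, hj⟩⟩ : Fin (R μ) × Fin (Rpar R T μ)) = (i', j') := eq_of_heq h2
    exact ⟨rfl, congrArg Fin.val (congrArg Prod.fst h2'), congrArg Fin.val (congrArg Prod.snd h2')⟩
  · rintro ⟨rfl, h2, h3⟩
    obtain rfl : i = i' := Fin.ext h2
    obtain rfl : (⟨j, hj⟩ : Fin (Rpar R T μ)) = j' := Fin.ext h3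
    rfl

theorem ofCoord_of_lt (v : Coord R T → ℝ) {μ : MTree N} (hμ : μ ∈ T.nodes) (i : Fin (R μ))
    {j : ℕ} (hj : j < Rpar R T μ) :
    ofCoord R T v μ i j = v ⟨⟨μ, List.mem_toFinset.2 hμ⟩, i, ⟨j, hj⟩⟩ :=
  dif_pos ⟨hμ, hj⟩

theorem ofCoord_of_not_lt (v : Coord R T → ℝ) (μ : MTree N) (i : Fin (R μ)) {j : ℕ}
    (hj : ¬j < Rpar R T μ) : ofCoord R T v μ i j = 0 :=
  dif_neg fun h => hj h.2

theorem toCoord_ofCoord (v : Coord R T → ℝ) : toCoord R T (ofCoord R T v) = v := by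
  funext ⟨⟨μ, hμ⟩, i, j⟩
  exact ofCoord_of_lt R T v (List.mem_toFinset.1 hμ) i j.isLt

theorem ofCoord_add_smul_single (v : Coord R T → ℝ) {μ : MTree N} (hμ : μ ∈ T.nodes.toFinset)
    (i : Fin (R μ)) (j : Fin (Rpar R T μ)) (s : ℝ) :
    ofCoord R T (v + s • Pi.single (⟨⟨μ, hμ⟩, i, j⟩ : Coord R T) 1)
      = upd R (ofCoord R T v) μ i j (v ⟨⟨μ, hμ⟩, i, j⟩ + s) := by
  funext μ' i' j'
  simp only [upd]
  by_cases hrel : μ' ∈ T.nodes ∧ j' < Rpar R T μ'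
  · rw [ofCoord_of_lt R T _ hrel.1 i' hrel.2, ofCoord_of_lt R T v hrel.1 i' hrel.2]
    simp only [Pi.add_apply, Pi.smul_apply, smul_eq_mul, Pi.single_apply,
      coord_mk_eq_iff R T hrel.1 i' hrel.2 hμ i j]
    split_ifs with hc
    · obtain ⟨rfl, hi, hj⟩ := hc
      obtain rfl : i' = i := Fin.ext hi
      obtain rfl : j' = j := hj
      simp
    · simp
  · have hc : ¬(μ' = μ ∧ (i' : ℕ) = i ∧ j' = j) := by
      rintro ⟨rfl, -, rfl⟩
      exact hrel ⟨List.mem_toFinset.1 hμ, j.isLt⟩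
    rw [if_neg hc]
    simp only [ofCoord, dif_neg hrel]

theorem endT_upd_eq_endT_ofCoord (hT : T.Valid) (W : ∀ μ : MTree N, Fin (R μ) → ℕ → ℝ)
    {μ : MTree N} (hμ : μ ∈ T.nodes.toFinset) (i : Fin (R μ)) (j : Fin (Rpar R T μ)) (s : ℝ) :
    endT D R (upd R W μ i j s) T
      = endT D R (ofCoord R T (toCoord R T W + (s - W μ i j) •
          Pi.single (⟨⟨μ, hμ⟩, i, j⟩ : Coord R T) 1)) T := by
  rw [ofCoord_add_smul_single, show toCoord R T W ⟨⟨μ, hμ⟩, i, j⟩ + (s - W μ i j) = s by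
    simp only [toCoord]; ring]
  refine endT_congr_of_relevant D R hT fun μ' hμ' i' j' hj' => ?_
  simp only [upd]
  split
  · rfl
  · rw [ofCoord_of_lt R T _ hμ' i' hj']; rfl

theorem contDiff_ofCoord_apply (μ : MTree N) (i : Fin (R μ)) (j : ℕ) :
    ContDiff ℝ ⊤ fun v : Coord R T → ℝ => ofCoord R T v μ i j := by
  simp only [ofCoord]
  split
  · exact contDiff_apply ℝ ℝ _
  · exact contDiff_const

theorem contDiff_interm_ofCoord : ∀ (t : MTree N) (r : ℕ) (x : Idx D),
    ContDiff ℝ ⊤ fun v : Coord R T → ℝ => interm D R (ofCoord R T v) t r x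
  | .leaf m, r, x => by
    simp only [interm]
    split
    · exact contDiff_ofCoord_apply R T _ _ _
    · exact contDiff_const
  | .node ts, r, x => by
    simp only [interm_node]
    refine ContDiff.sum fun r' _ => (contDiff_ofCoord_apply R T _ _ _).mul
      (contDiff_list_prod_map ts fun c hc => contDiff_interm_ofCoord c r' x)
termination_by t => sizeOf t
decreasing_by have := List.sizeOf_lt_of_mem hc; simp only [MTree.node.sizeOf_spec]; omega

noncomputable def endMap (v : Coord R T → ℝ) : Idx D → ℝ := endT D R (ofCoord R T v) T

noncomputable def phiH (L : (Idx D → ℝ) → ℝ) (v : Coord R T → ℝ) : ℝ := L (endMap D R T v)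

theorem contDiff_endMap_apply (x : Idx D) :
    ContDiff ℝ ⊤ fun v : Coord R T → ℝ => endMap D R T v x :=
  contDiff_interm_ofCoord D R T T 0 x

theorem differentiable_endMap : Differentiable ℝ (endMap D R T) :=
  differentiable_pi.2 fun x => (contDiff_endMap_apply D R T x).differentiable (by simp)

theorem differentiable_phiH {L : (Idx D → ℝ) → ℝ} (hL : Differentiable ℝ L) :
    Differentiable ℝ (phiH D R T L) :=
  hL.comp (differentiable_endMap D R T)

theorem dObj_eq_fderiv_phiH (hT : T.Valid) {L : (Idx D → ℝ) → ℝ} (hL : Differentiable ℝ L)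
    (W : ∀ μ : MTree N, Fin (R μ) → ℕ → ℝ) (q : Coord R T) :
    dObj D L R T W q.1.1 q.2.1 q.2.2
      = fderiv ℝ (phiH D R T L) (toCoord R T W) (Pi.single q 1) := by
  obtain ⟨⟨μ, hμ⟩, i, j⟩ := q
  have hline : (fun s => obj D L R T (upd R W μ i j s)) = fun s => phiH D R T L
      (toCoord R T W + (s - W μ i j) • Pi.single (⟨⟨μ, hμ⟩, i, j⟩ : Coord R T) 1) :=
    funext fun s => by rw [obj, phiH, endMap, endT_upd_eq_endT_ofCoord D R T hT W hμ i j s]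
  have hwent : went R W μ i j = W μ i j := by rw [went, dif_pos i.isLt]
  rw [dObj, hline, hwent]
  exact deriv_add_sub_smul_eq_fderiv (differentiable_phiH D R T hL _) _ _

theorem hasDerivAt_toCoord_of_gradFlow (hT : T.Valid) {L : (Idx D → ℝ) → ℝ}
    (hL : Differentiable ℝ L) {Wt : ℝ → ∀ ν : MTree N, Fin (R ν) → ℕ → ℝ}
    (hflow : GradFlow D L R T Wt) (q : Coord R T) {t : ℝ} (ht : 0 ≤ t) :
    HasDerivAt (fun s => toCoord R T (Wt s) q)
      (-fderiv ℝ (phiH D R T L) (toCoord R T (Wt t)) (Pi.single q 1)) t := by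
  rw [← dObj_eq_fderiv_phiH D R T hT hL]
  exact hflow _ _ _ t ht

theorem tgrad_eq_fderiv {L : (Idx D → ℝ) → ℝ} (hL : Differentiable ℝ L) (A : Idx D → ℝ)
    (x : Idx D) : tgrad D L A x = fderiv ℝ L A (Pi.single x 1) := by
  have hline : (fun s => L (Function.update A x s))
      = fun s => L (A + (s - A x) • Pi.single x 1) := by
    funext s
    congr 1
    funext y
    by_cases hy : y = x
    · subst hy; simp
    · simp [hy]
  rw [tgrad, hline]
  exact deriv_add_sub_smul_eq_fderiv (hL A) _ _

theorem fderiv_eq_sum_tgrad {L : (Idx D → ℝ) → ℝ} (hL : Differentiable ℝ L)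
    (A u : Idx D → ℝ) : fderiv ℝ L A u = ∑ x, u x * tgrad D L A x := by
  conv_lhs => rw [← Finset.univ_sum_single u]
  rw [map_sum]
  refine Finset.sum_congr rfl fun x _ => ?_
  rw [tgrad_eq_fderiv D hL, ← smul_eq_mul, ← map_smul, ← Pi.single_smul, smul_eq_mul, mul_one]

theorem fderiv_phiH_apply {L : (Idx D → ℝ) → ℝ} (hL : Differentiable ℝ L)
    (v u : Coord R T → ℝ) :
    fderiv ℝ (phiH D R T L) v u
      = ∑ x, fderiv ℝ (fun w => endMap D R T w x) v u * tgrad D L (endMap D R T v) x := by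
  have hG : HasFDerivAt (endMap D R T)
      (ContinuousLinearMap.pi fun x => fderiv ℝ (fun w => endMap D R T w x) v) v :=
    hasFDerivAt_pi.2 fun x =>
      ((contDiff_endMap_apply D R T x).differentiable (by simp) v).hasFDerivAt
  rw [show phiH D R T L = L ∘ endMap D R T from rfl, ((hL _).hasFDerivAt.comp v hG).fderiv,
    ContinuousLinearMap.comp_apply, fderiv_eq_sum_tgrad D hL]
  rfl

end Coordinates

section LocalComponent

variable {N : ℕ} (D : Fin N → ℕ) (R : MTree N → ℕ) (T : MTree N)

/-- The coordinates of the vectors of `LC(ν,r)`. -/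
noncomputable def lcCoords (ν : MTree N) (r : ℕ) : Finset (Coord R T) :=
  Finset.univ.filter fun q =>
    (q.1.1 = ν ∧ (q.2.1 : ℕ) = r) ∨ (q.1.1 ∈ ν.children ∧ (q.2.2 : ℕ) = r)

theorem mem_lcCoords {ν : MTree N} {r : ℕ} {q : Coord R T} :
    q ∈ lcCoords R T ν r ↔
      (q.1.1 = ν ∧ (q.2.1 : ℕ) = r) ∨ (q.1.1 ∈ ν.children ∧ (q.2.2 : ℕ) = r) := by
  simp [lcCoords]

variable {T}

theorem forall_toCoord_lcCoords_eq_zero_iff (hT : T.Valid) {ν : MTree N} (hν : ν ∈ T.nodes)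
    (W : ∀ μ : MTree N, Fin (R μ) → ℕ → ℝ) (r : Fin (R ν)) :
    (∀ q ∈ lcCoords R T ν r, toCoord R T W q = 0) ↔
      (∀ j : ℕ, j < Rpar R T ν → W ν r j = 0) ∧
      (∀ c ∈ ν.children, ∀ i : Fin (R c), W c i (r : ℕ) = 0) := by
  constructor
  · intro h
    refine ⟨fun j hj => h ⟨⟨ν, List.mem_toFinset.2 hν⟩, r, ⟨j, hj⟩⟩
      ((mem_lcCoords R T).2 (Or.inl ⟨rfl, rfl⟩)), fun c hc i => ?_⟩
    have hr : (r : ℕ) < Rpar R T c := by rw [Rpar_eq_of_mem_children R hT hν hc]; exact r.isLt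
    exact h ⟨⟨c, List.mem_toFinset.2 (mem_nodes_of_mem_children_of_mem_nodes hc hν)⟩, i, ⟨r, hr⟩⟩
      ((mem_lcCoords R T).2 (Or.inr ⟨hc, rfl⟩))
  · rintro ⟨hrow, hcol⟩ ⟨⟨μ, hμ⟩, i, j⟩ hq
    rcases (mem_lcCoords R T).1 hq with ⟨rfl, hi⟩ | ⟨hc, hj⟩
    · obtain rfl : i = r := Fin.ext hi
      exact hrow j j.isLt
    · show W μ i j = 0
      rw [show (j : ℕ) = r from hj]
      exact hcol μ hc i

theorem endMap_add_smul_single_of_mem_lcCoords (hT : T.Valid) {ν : MTree N}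
    (hν : ν ∈ T.nodes) (hint : ν.IsInterior) (r : Fin (R ν)) {v : Coord R T → ℝ}
    (hv : ∀ q ∈ lcCoords R T ν r, v q = 0) {q : Coord R T} (hq : q ∈ lcCoords R T ν r)
    (s : ℝ) : endMap D R T (v + s • Pi.single q 1) = endMap D R T v := by
  obtain ⟨hrow, hcol⟩ := (forall_toCoord_lcCoords_eq_zero_iff R hT hν (ofCoord R T v) r).1
    (by simpa only [toCoord_ofCoord] using hv)
  obtain ⟨⟨μ, hμ⟩, i, j⟩ := q
  rw [endMap, endMap, ofCoord_add_smul_single, hv _ hq, zero_add]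
  rcases (mem_lcCoords R T).1 hq with ⟨rfl, hi⟩ | ⟨hc, hj⟩
  · rw [show (i : ℕ) = r from hi]
    exact endT_upd_row_of_col_eq_zero D R hT hν hint _ hcol _ _
  · rw [show (j : ℕ) = r from hj]
    refine endT_upd_col_of_row_eq_zero D R hT hν _ (fun i' j' hi' => ?_) hc _ _
    obtain rfl : i' = r := Fin.ext hi'
    by_cases hj' : j' < Rpar R T ν
    · exact hrow j' hj'
    · exact ofCoord_of_not_lt R T v ν i' hj'

theorem fderiv_endMap_single_eq_zero (hT : T.Valid) {ν : MTree N} (hν : ν ∈ T.nodes)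
    (hint : ν.IsInterior) (r : Fin (R ν)) {v : Coord R T → ℝ}
    (hv : ∀ q ∈ lcCoords R T ν r, v q = 0) {q : Coord R T} (hq : q ∈ lcCoords R T ν r)
    (x : Idx D) : fderiv ℝ (fun w => endMap D R T w x) v (Pi.single q 1) = 0 :=
  fderiv_apply_eq_zero_of_forall_add_smul_eq
    ((contDiff_endMap_apply D R T x).differentiable (by simp) v)
    fun s => congrFun (endMap_add_smul_single_of_mem_lcCoords D R hT hν hint r hv hq s) x

theorem LocSmooth.exists_norm_tgrad_le {L : (Idx D → ℝ) → ℝ} (hLs : LocSmooth D L)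
    {K : Set (Idx D → ℝ)} (hK : IsCompact K) : ∃ M, ∀ A ∈ K, ‖tgrad D L A‖ ≤ M := by
  obtain ⟨β, hβ⟩ := hLs K hK
  exact hK.exists_bound_of_continuousOn hβ.continuousOn

theorem exists_abs_fderiv_phiH_single_le (hT : T.Valid) {ν : MTree N} (hν : ν ∈ T.nodes)
    (hint : ν.IsInterior) {L : (Idx D → ℝ) → ℝ} (hL : Differentiable ℝ L)
    (hLs : LocSmooth D L) (r : Fin (R ν)) (ρ : ℝ) :
    ∃ C, ∀ v : Coord R T → ℝ, ‖v‖ ≤ ρ → ∀ q ∈ lcCoords R T ν r,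
      |fderiv ℝ (phiH D R T L) v (Pi.single q 1)|
        ≤ C * ‖v - (lcCoords R T ν r).piecewise (0 : Coord R T → ℝ) v‖ := by
  set Q := lcCoords R T ν r
  set B := Metric.closedBall (0 : Coord R T → ℝ) ρ
  let F : (Coord R T → ℝ) → Coord R T × Idx D → ℝ :=
    fun v p => fderiv ℝ (fun w => endMap D R T w p.2) v (Pi.single p.1 1)
  have hF : ContDiff ℝ ⊤ F := contDiff_pi.2 fun p =>
    ((contDiff_endMap_apply D R T p.2).fderiv_right le_top).clm_apply contDiff_const
  obtain ⟨K, hK⟩ := hF.contDiffOn.exists_lipschitzOnWith (by simp) (convex_closedBall 0 ρ)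
    (isCompact_closedBall 0 ρ)
  obtain ⟨M, hM⟩ := LocSmooth.exists_norm_tgrad_le D hLs
    ((isCompact_closedBall 0 ρ).image (differentiable_endMap D R T).continuous)
  refine ⟨Fintype.card (Idx D) * (K * M), fun v hv q hq => ?_⟩
  have hvB : v ∈ B := mem_closedBall_zero_iff.2 hv
  have hprB : Q.piecewise 0 v ∈ B :=
    mem_closedBall_zero_iff.2 ((norm_piecewise_zero_le Q v).trans hv)
  have hF_le : ∀ x, |F v (q, x)| ≤ K * ‖v - Q.piecewise 0 v‖ := fun x => by
    have hF0 : F (Q.piecewise 0 v) (q, x) = 0 := fderiv_endMap_single_eq_zero D R hT hν hint r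
      (fun p hp => Finset.piecewise_eq_of_mem _ _ _ hp) hq x
    calc |F v (q, x)| = ‖(F v - F (Q.piecewise 0 v)) (q, x)‖ := by simp [hF0]
      _ ≤ ‖F v - F (Q.piecewise 0 v)‖ := norm_le_pi_norm _ _
      _ ≤ K * ‖v - Q.piecewise 0 v‖ := hK.norm_sub_le hvB hprB
  have htgrad_le : ∀ x, |tgrad D L (endMap D R T v) x| ≤ M := fun x =>
    (norm_le_pi_norm _ x).trans (hM _ ⟨v, hvB, rfl⟩)
  rw [fderiv_phiH_apply D R T hL]
  have hsum := abs_sum_mul_le Finset.univ (fun x _ => hF_le x) (fun x _ => htgrad_le x)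
  rw [Finset.card_univ] at hsum
  exact hsum.trans_eq (by ring)

end LocalComponent

end HTF

open HTF HTF.MTree in
theorem statement10_general {N : ℕ} (D : Fin N → ℕ) (L : (Idx D → ℝ) → ℝ)
    (hL : Differentiable ℝ L) (hLs : LocSmooth D L)
    (T : MTree N) (hT : T.Valid)
    (R : MTree N → ℕ)
    (Wt : ℝ → ∀ ν : MTree N, Fin (R ν) → ℕ → ℝ)
    (hflow : GradFlow D L R T Wt)
    (ν : MTree N) (hν : ν ∈ T.nodes) (hint : ν.IsInterior) (r : Fin (R ν))
    (t₀ : ℝ) (ht₀ : 0 ≤ t₀)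
    (hrow0 : ∀ j : ℕ, j < Rpar R T ν → Wt t₀ ν r j = 0)
    (hcol0 : ∀ c ∈ ν.children, ∀ i : Fin (R c), Wt t₀ c i (r : ℕ) = 0) :
    ∀ t : ℝ, 0 ≤ t →
      (∀ j : ℕ, j < Rpar R T ν → Wt t ν r j = 0) ∧
      (∀ c ∈ ν.children, ∀ i : Fin (R c), Wt t c i (r : ℕ) = 0) := by
  intro t ht
  set v : ℝ → Coord R T → ℝ := fun s => toCoord R T (Wt s)
  have hv : ∀ q, ∀ s ∈ Icc 0 (max t t₀), HasDerivAt (fun s => v s q)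
      (-fderiv ℝ (phiH D R T L) (v s) (Pi.single q 1)) s := fun q s hs =>
    hasDerivAt_toCoord_of_gradFlow D R T hT hL hflow q hs.1
  obtain ⟨ρ, hρ⟩ := isCompact_Icc.exists_bound_of_continuousOn
    (continuousOn_pi.2 fun q s hs => (hv q s hs).continuousAt.continuousWithinAt)
  obtain ⟨C, hC⟩ := exists_abs_fderiv_phiH_single_le D R hT hν hint hL hLs r ρ
  refine (forall_toCoord_lcCoords_eq_zero_iff R hT hν (Wt t) r).1 ?_
  exact eq_zero_of_abs_deriv_le_mul_norm_sub_piecewise (lcCoords R T ν r)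
    (fun q _ => hv q) (fun q hq s hs => by simpa only [abs_neg] using hC _ (hρ s hs) q hq)
    ⟨ht₀, le_max_right t t₀⟩
    ((forall_toCoord_lcCoords_eq_zero_iff R hT hν (Wt t₀) r).2 ⟨hrow0, hcol0⟩)
    t ⟨ht, le_max_left t t₀⟩

open HTF HTF.MTree in
/-- under gradient flow, if at some time `t₀ ≥ 0` all weight vectors
of the `(ν,r)`'th local component vanish, then they vanish at every time `t ≥ 0`. -/
theorem statement10 {N : ℕ} (D : Fin N → ℕ) (L : (Idx D → ℝ) → ℝ)
    (hL : Differentiable ℝ L) (hLs : LocSmooth D L) (hL0 : ∀ A, 0 ≤ L A)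
    (T : MTree N) (hT : T.Valid)
    (R : MTree N → ℕ) (hR : ∀ i : Fin N, R (MTree.leaf i) = D i)
    (Wt : ℝ → ∀ ν : MTree N, Fin (R ν) → ℕ → ℝ)
    (hflow : GradFlow D L R T Wt)
    (ν : MTree N) (hν : ν ∈ T.nodes) (hint : ν.IsInterior) (r : Fin (R ν))
    (t₀ : ℝ) (ht₀ : 0 ≤ t₀)
    (hrow0 : ∀ j : ℕ, j < Rpar R T ν → Wt t₀ ν r j = 0)
    (hcol0 : ∀ c ∈ ν.children, ∀ i : Fin (R c), Wt t₀ c i (r : ℕ) = 0) :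
    ∀ t : ℝ, 0 ≤ t →
      (∀ j : ℕ, j < Rpar R T ν → Wt t ν r j = 0) ∧
      (∀ c ∈ ν.children, ∀ i : Fin (R c), Wt t c i (r : ℕ) = 0) :=
  statement10_general D L hL hLs T hT R Wt hflow ν hν hint r t₀ ht₀ hrow0 hcol0
end

section
/- For every order N ∈ ℕ with N ≥ 3 and mode dimensions D_1,...,D_N ∈ ℕ with D_n ≥ 2 for all n, there exists a tensor completion problem — i.e. a loss L(W) = (1/|Ω|)·Σ_{(d_1,...,d_N)∈Ω}(W_{d_1,...,d_N} − W*_{d_1,...,d_N})² with ground truth W* ∈ ℝ^{D_1×⋯×D_N} and set of observed entries Ω ⊆ [D_1]×⋯×[D_N] — such that for every mode tree T over [N], the set R_T := {(rank ⟦W⟧_ν)_{ν∈T∖{[N]}} : W ∈ ℝ^{D_1×⋯×D_N}, L(W) = 0} of hierarchical tensor ranks of tensors fitting the observations includes two elements (R_ν)_{ν∈T∖{[N]}} and (R'_ν)_{ν∈T∖{[N]}} for which: (i) there exists no (R''_ν)_{ν∈T∖{[N]}} ∈ R_T different from both of them satisfying (R''_ν)_ν ≤ (R_ν)_ν or (R''_ν)_ν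 ≤ (R'_ν)_ν; and (ii) neither (R_ν)_ν ≤ (R'_ν)_ν nor (R'_ν)_ν ≤ (R_ν)_ν; here ≤ denotes the standard product partial order on tuples ((r_1,...,r_K) ≤ (r'_1,...,r'_K) iff r_i ≤ r'_i for all i). In particular, R_T contains multiple minimal elements, none smaller than or equal to the other. -/
namespace Matrix

variable {m n R : Type*} [Fintype n] [Field R]

theorem one_le_rank_of_ne_zero (M : Matrix m n R) {i : m} {j : n} (h : M i j ≠ 0) :
    1 ≤ M.rank := by
  have hunit : IsUnit (M.submatrix (fun _ : Fin 1 => i) fun _ : Fin 1 => j) := by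
    rwa [isUnit_iff_isUnit_det, isUnit_iff_ne_zero, det_fin_one]
  calc 1 = (M.submatrix (fun _ : Fin 1 => i) fun _ : Fin 1 => j).rank := by
        rw [rank_of_isUnit _ hunit, Fintype.card_fin]
    _ ≤ M.rank := rank_submatrix_le _ _ _

theorem two_le_rank_of_mul_ne_mul (M : Matrix m n R) {i i' : m} {j j' : n}
    (h : M i j * M i' j' ≠ M i j' * M i' j) : 2 ≤ M.rank := by
  have hunit : IsUnit (M.submatrix ![i, i'] ![j, j']) := by
    rwa [isUnit_iff_isUnit_det, isUnit_iff_ne_zero, det_fin_two, Ne, sub_eq_zero]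
  calc 2 = (M.submatrix ![i, i'] ![j, j']).rank := by
        rw [rank_of_isUnit _ hunit, Fintype.card_fin]
    _ ≤ M.rank := rank_submatrix_le _ _ _

theorem rank_of_add_le_two [Fintype m] (a : m → R) (b : n → R) :
    (of fun i j => a i + b j).rank ≤ 2 := by
  have : (of fun i j => a i + b j) = of (fun i t => ![a i, 1] t) * of fun t j => ![1, b j] t := by
    ext i j
    simp [mul_apply, Fin.sum_univ_two]
  calc (of fun i j => a i + b j).rank ≤ (of fun i t => ![a i, 1] t).rank :=
        this ▸ rank_mul_le_left _ _
    _ ≤ 2 := (rank_le_card_width _).trans_eq (Fintype.card_fin 2)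

end Matrix

theorem mean_sq_sub_eq_zero_iff {α : Type*} (s : Finset α) (f g : α → ℝ) :
    (1 / (s.card : ℝ)) * ∑ x ∈ s, (f x - g x) ^ 2 = 0 ↔ ∀ x ∈ s, f x = g x := by
  rcases s.eq_empty_or_nonempty with rfl | hs
  · simp
  rw [mul_eq_zero, or_iff_right (by simpa using hs.ne_empty),
    Finset.sum_eq_zero_iff_of_nonneg fun _ _ => sq_nonneg _]
  simp [sub_eq_zero]

namespace HTF.MTree

variable {N : ℕ}

theorem leaf_mem_nodes : ∀ {t : MTree N} {i : Fin N}, i ∈ t.leafList → leaf i ∈ t.nodes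
  | .leaf _, _, h => by simp_all [leafList, nodes]
  | .node ts, i, h => by
      obtain ⟨t, ht, hi⟩ := List.mem_flatMap.mp (by rwa [leafList] at h)
      rw [nodes]
      exact List.mem_cons_of_mem _ (List.mem_flatMap.mpr ⟨t, ht, leaf_mem_nodes hi⟩)
termination_by t => sizeOf t
decreasing_by simp only [MTree.node.sizeOf_spec]; have := List.sizeOf_lt_of_mem t.2; omega

@[simp]
theorem label_leaf (i : Fin N) : (leaf i : MTree N).label = {i} := by
  simp [label, leafList]

theorem Valid.leaf_mem_nodes {T : MTree N} (hT : T.Valid) (i : Fin N) : leaf i ∈ T.nodes :=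
  MTree.leaf_mem_nodes (hT.2.1 i)

theorem Valid.leaf_ne {T : MTree N} (hT : T.Valid) {i j : Fin N} (hij : i ≠ j) : leaf i ≠ T := by
  rintro rfl
  have : j = i := by simpa [leafList] using hT.2.1 j
  exact hij this.symm

end HTF.MTree

namespace HTF

open Matrix Set

variable {N : ℕ}

section Corner

variable (D : Fin N → ℕ)

theorem matricize_restrict (I : Finset (Fin N)) (A : Idx D → ℝ) (x : Idx D) :
    matricize D I A (fun i => x i) (fun j => x j) = A x := by
  simp [matricize]

theorem one_le_rank_matricize {I : Finset (Fin N)} {A : Idx D → ℝ} {x : Idx D} (hx : A x ≠ 0) :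
    1 ≤ (matricize D I A).rank :=
  one_le_rank_of_ne_zero _ (i := fun i => x i) (j := fun j => x j) (by rwa [matricize_restrict])

def corner (hD : ∀ n, 2 ≤ D n) (S : Finset (Fin N)) : Idx D :=
  fun n => if n ∈ S then ⟨1, hD n⟩ else ⟨0, by have := hD n; omega⟩

variable {D} (hD : ∀ n, 2 ≤ D n)

theorem corner_val (S : Finset (Fin N)) (n : Fin N) :
    ((corner D hD S n : Fin (D n)) : ℕ) = if n ∈ S then 1 else 0 := by
  unfold corner
  split_ifs <;> rfl

theorem matricize_corner {I P Q : Finset (Fin N)} (A : Idx D → ℝ) (hP : P ⊆ I) (hQ : Q ⊆ Iᶜ) :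
    matricize D I A (fun i => corner D hD P i) (fun j => corner D hD Q j) =
      A (corner D hD (P ∪ Q)) := by
  simp only [matricize]
  congr 1
  funext n
  by_cases hn : n ∈ I
  · have : n ∉ Q := fun h => Finset.mem_compl.mp (hQ h) hn
    simp [corner, hn, this]
  · have : n ∉ P := fun h => hn (hP h)
    simp [corner, hn, this]

theorem two_le_rank_matricize_of_corner {I P Q : Finset (Fin N)} {A : Idx D → ℝ}
    (hP : P ⊆ I) (hQ : Q ⊆ Iᶜ)
    (h : A (corner D hD (P ∪ Q)) * A (corner D hD ∅) ≠ A (corner D hD P) * A (corner D hD Q)) :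
    2 ≤ (matricize D I A).rank := by
  refine two_le_rank_of_mul_ne_mul _ (i := fun i => corner D hD P i)
    (i' := fun i => corner D hD ∅ i) (j := fun j => corner D hD Q j)
    (j' := fun j => corner D hD ∅ j) ?_
  simpa only [matricize_corner hD A (Finset.empty_subset _) (Finset.empty_subset _),
    matricize_corner hD A hP hQ, matricize_corner hD A hP (Finset.empty_subset _),
    matricize_corner hD A (Finset.empty_subset _) hQ, Finset.empty_union, Finset.union_empty]
    using h

theorem corner_mul_eq_of_rank_matricize_le_one {I P Q : Finset (Fin N)} {A : Idx D → ℝ}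
    (hA : (matricize D I A).rank ≤ 1) (hP : P ⊆ I) (hQ : Q ⊆ Iᶜ) :
    A (corner D hD (P ∪ Q)) * A (corner D hD ∅) = A (corner D hD P) * A (corner D hD Q) := by
  by_contra h
  have := two_le_rank_matricize_of_corner hD hP hQ h
  omega

end Corner

section CoordSum

variable {D : Fin N → ℕ} (g : ∀ n, Fin (D n) → ℝ) (I : Finset (Fin N))

noncomputable def coordSum : Idx D → ℝ := fun x => ∑ n, g n (x n)

theorem matricize_coordSum :
    matricize D I (coordSum g) =
      of fun ρ κ => (∑ n : {n // n ∈ I}, g n (ρ n)) + ∑ n : {n // n ∉ I}, g n (κ n) := by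
  ext ρ κ
  rw [matricize, of_apply, coordSum, ← Fintype.sum_subtype_add_sum_subtype (· ∈ I)]
  congr 1 <;> exact Finset.sum_congr (by congr!) fun n _ => by simp [n.2]

theorem rank_matricize_coordSum_le_two : (matricize D I (coordSum g)).rank ≤ 2 := by
  rw [matricize_coordSum]
  exact rank_of_add_le_two _ _

theorem rank_matricize_coordSum_le_one_of_const_left (c : Fin N → ℝ)
    (hg : ∀ n ∈ I, ∀ a, g n a = c n) : (matricize D I (coordSum g)).rank ≤ 1 := by
  have : matricize D I (coordSum g) = vecMulVec (fun _ => 1)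
      fun κ => (∑ n : {n // n ∈ I}, c n) + ∑ n : {n // n ∉ I}, g n (κ n) := by
    rw [matricize_coordSum]
    ext ρ κ
    simp [vecMulVec_apply, hg _ (Finset.coe_mem _)]
  exact this ▸ rank_vecMulVec_le _ _

theorem rank_matricize_coordSum_le_one_of_const_right (c : Fin N → ℝ)
    (hg : ∀ n ∉ I, ∀ a, g n a = c n) : (matricize D I (coordSum g)).rank ≤ 1 := by
  have : matricize D I (coordSum g) = vecMulVec
      (fun ρ => (∑ n : {n // n ∈ I}, g n (ρ n)) + ∑ n : {n // n ∉ I}, c n) fun _ => 1 := by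
    rw [matricize_coordSum]
    ext ρ κ
    simp [vecMulVec_apply, fun n : {n // n ∉ I} => hg n n.2]
  exact this ▸ rank_vecMulVec_le _ _

end CoordSum

section SkipSum

variable (D : Fin N → ℕ)

/-- The ground truth `S_i(x) = 1 + ∑_{n ≠ i} x_n`, with coordinates counted from `0`. -/
noncomputable def skipSum (i : Fin N) : Idx D → ℝ :=
  coordSum fun n a => if n = i then 1 else ((a : ℕ) : ℝ)

def SplitsOthers (i : Fin N) (I : Finset (Fin N)) : Prop :=
  (I.erase i).Nonempty ∧ (Iᶜ.erase i).Nonempty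

def observed (i j : Fin N) : Finset (Idx D) :=
  Finset.univ.filter fun x => (x i : ℕ) = x j

variable {D}

theorem skipSum_corner (hD : ∀ n, 2 ≤ D n) (i : Fin N) (S : Finset (Fin N)) :
    skipSum D i (corner D hD S) = 1 + (S.erase i).card := by
  rw [skipSum, coordSum, ← Finset.add_sum_erase _ _ (Finset.mem_univ i), if_pos rfl,
    Finset.sum_congr rfl fun n hn => by
      rw [if_neg (Finset.ne_of_mem_erase hn), corner_val, Nat.cast_ite, Nat.cast_one,
        Nat.cast_zero],
    Finset.sum_boole, Finset.filter_mem_eq_inter, Finset.erase_inter, Finset.univ_inter]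

theorem rank_matricize_skipSum_of_splitsOthers (hD : ∀ n, 2 ≤ D n) {i : Fin N}
    {I : Finset (Fin N)} (hI : SplitsOthers i I) : (matricize D I (skipSum D i)).rank = 2 := by
  obtain ⟨⟨a, ha⟩, ⟨b, hb⟩⟩ := hI
  rw [Finset.mem_erase] at ha hb
  refine le_antisymm (rank_matricize_coordSum_le_two _ I) ?_
  refine two_le_rank_matricize_of_corner hD (P := {a}) (Q := {b}) (by simpa using ha.2)
    (by simpa using hb.2) ?_
  have hab : a ≠ b := by rintro rfl; exact Finset.mem_compl.mp hb.2 ha.2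
  norm_num [skipSum_corner, Finset.erase_eq_of_notMem, ha.1.symm, hb.1.symm, Finset.card_pair hab]

theorem rank_matricize_skipSum_of_not_splitsOthers (hD : ∀ n, 2 ≤ D n) {i : Fin N}
    {I : Finset (Fin N)} (hI : ¬SplitsOthers i I) : (matricize D I (skipSum D i)).rank = 1 := by
  refine le_antisymm ?_ (one_le_rank_matricize D (x := corner D hD ∅) (by simp [skipSum_corner]))
  simp only [SplitsOthers, not_and_or, Finset.not_nonempty_iff_eq_empty] at hI
  rcases hI with hI | hI
  · refine rank_matricize_coordSum_le_one_of_const_left _ I (fun _ => 1) fun n hn _ => ?_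
    have : n = i := by_contra fun h => by simpa [hI] using Finset.mem_erase.2 ⟨h, hn⟩
    simp [this]
  · refine rank_matricize_coordSum_le_one_of_const_right _ I (fun _ => 1) fun n hn _ => ?_
    have : n = i := by_contra fun h => by
      simpa [hI] using Finset.mem_erase.2 ⟨h, Finset.mem_compl.2 hn⟩
    simp [this]

theorem not_splitsOthers_singleton (i : Fin N) : ¬SplitsOthers i {i} := by
  simp [SplitsOthers]

theorem splitsOthers_singleton {i j k : Fin N} (hij : i ≠ j) (hik : i ≠ k) (hjk : j ≠ k) :
    SplitsOthers i {j} :=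
  ⟨⟨j, by simp [hij.symm]⟩, ⟨k, by simp [hik.symm, hjk.symm]⟩⟩

theorem observed_comm (i j : Fin N) : observed D i j = observed D j i := by
  simp only [observed, eq_comm]

theorem eqOn_skipSum_observed (i j : Fin N) :
    EqOn (skipSum D i) (skipSum D j) (observed D i j) := by
  have key : ∀ l x, skipSum D l x = 1 + ∑ n, ((x n : ℕ) : ℝ) - (x l : ℕ) := fun l x => by
    simp [skipSum, coordSum, Finset.sum_ite, Finset.filter_ne', Finset.filter_eq',
      Finset.sum_erase_eq_sub]
    ring
  intro x hx
  simp only [observed, Finset.coe_filter, Finset.mem_univ, true_and] at hx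
  rw [key, key, hx]

theorem corner_mem_observed (hD : ∀ n, 2 ≤ D n) {i j : Fin N} {S : Finset (Fin N)}
    (hS : i ∈ S ↔ j ∈ S) : corner D hD S ∈ observed D i j := by
  simp [observed, corner_val, hS]

end SkipSum

section Fits

variable {D : Fin N → ℕ} {i j k : Fin N} {A : Idx D → ℝ}

theorem apply_corner_of_eqOn (hD : ∀ n, 2 ≤ D n) (hA : EqOn A (skipSum D i) (observed D i j))
    {S : Finset (Fin N)} (hS : i ∈ S ↔ j ∈ S) : A (corner D hD S) = 1 + (S.erase i).card := by
  rw [hA (corner_mem_observed hD hS), skipSum_corner]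

theorem two_le_rank_matricize_of_eqOn_of_mem_of_notMem (hD : ∀ n, 2 ≤ D n)
    (hA : EqOn A (skipSum D i) (observed D i j))
    {I : Finset (Fin N)} {a b : Fin N} (ha : a ∈ I) (hb : b ∉ I) (hai : a ≠ i) (haj : a ≠ j)
    (hbi : b ≠ i) (hbj : b ≠ j) : 2 ≤ (matricize D I A).rank := by
  refine two_le_rank_matricize_of_corner hD (P := {a}) (Q := {b}) (by simpa) (by simpa) ?_
  have hab : a ≠ b := by rintro rfl; exact hb ha
  norm_num [apply_corner_of_eqOn hD hA, hai.symm, haj.symm, hbi.symm, hbj.symm,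
    Finset.erase_eq_of_notMem, Finset.card_pair hab]

theorem two_le_rank_matricize_of_eqOn_of_separates (hD : ∀ n, 2 ≤ D n)
    (hA : EqOn A (skipSum D i) (observed D i j))
    (hij : i ≠ j) (hik : i ≠ k) (hjk : j ≠ k) (hi : (matricize D {i} A).rank ≤ 1)
    {I : Finset (Fin N)} (hI : j ∈ I ↔ k ∉ I) : 2 ≤ (matricize D I A).rank := by
  by_contra! hI1
  replace hI1 : (matricize D I A).rank ≤ 1 := Nat.le_of_lt_succ hI1
  have hjk' : A (corner D hD {j, k}) * A (corner D hD ∅) =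
      A (corner D hD {j}) * A (corner D hD {k}) := by
    by_cases hj : j ∈ I
    · simpa using corner_mul_eq_of_rank_matricize_le_one hD hI1 (P := {j}) (Q := {k})
        (by simpa) (by simpa using hI.1 hj)
    · have hk : k ∈ I := by_contra fun hk => hj (hI.2 hk)
      simpa [Finset.pair_comm k j, mul_comm] using corner_mul_eq_of_rank_matricize_le_one hD hI1
        (P := {k}) (Q := {j}) (by simpa) (by simpa)
  have hij' := corner_mul_eq_of_rank_matricize_le_one hD hi (P := {i}) (Q := {j}) le_rfl
    (by simpa using hij)
  have hijk := corner_mul_eq_of_rank_matricize_le_one hD hi (P := {i}) (Q := {j, k}) le_rfl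
    (by simp [hij, hik])
  simp [apply_corner_of_eqOn hD hA, hij, hik, hjk, hij.symm, Finset.erase_eq_of_notMem] at hjk' hij' hijk
  have : (3 : ℝ) = 4 := by linear_combination hijk + A (corner D hD {i}) * hjk' - 2 * hij'
  norm_num at this

theorem two_le_rank_matricize_of_eqOn (hD : ∀ n, 2 ≤ D n)
    (hA : EqOn A (skipSum D i) (observed D i j)) (hij : i ≠ j) (hik : i ≠ k) (hjk : j ≠ k)
    (hi : (matricize D {i} A).rank ≤ 1) {I : Finset (Fin N)} (hI : SplitsOthers i I) :
    2 ≤ (matricize D I A).rank := by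
  obtain ⟨⟨a, ha⟩, ⟨b, hb⟩⟩ := hI
  rw [Finset.mem_erase] at ha
  rw [Finset.mem_erase, Finset.mem_compl] at hb
  by_cases hj : j ∈ I <;> by_cases hk : k ∈ I
  · exact two_le_rank_matricize_of_eqOn_of_mem_of_notMem hD hA hk hb.2 hik.symm hjk.symm hb.1
      fun h => hb.2 (h ▸ hj)
  · exact two_le_rank_matricize_of_eqOn_of_separates hD hA hij hik hjk hi (by tauto)
  · exact two_le_rank_matricize_of_eqOn_of_separates hD hA hij hik hjk hi (by tauto)
  · exact two_le_rank_matricize_of_eqOn_of_mem_of_notMem hD hA ha.2 hk ha.1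
      (fun h => hj (h ▸ ha.2)) hik.symm hjk.symm

theorem rank_matricize_eq_of_eqOn_of_le (hD : ∀ n, 2 ≤ D n)
    (hA : EqOn A (skipSum D i) (observed D i j)) (hij : i ≠ j) (hik : i ≠ k) (hjk : j ≠ k)
    (hi : (matricize D {i} A).rank ≤ 1) {I : Finset (Fin N)}
    (hle : (matricize D I A).rank ≤ (matricize D I (skipSum D i)).rank) :
    (matricize D I A).rank = (matricize D I (skipSum D i)).rank := by
  by_cases hI : SplitsOthers i I
  · rw [rank_matricize_skipSum_of_splitsOthers hD hI] at hle ⊢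
    exact le_antisymm hle (two_le_rank_matricize_of_eqOn hD hA hij hik hjk hi hI)
  · rw [rank_matricize_skipSum_of_not_splitsOthers hD hI] at hle ⊢
    exact le_antisymm hle
      (one_le_rank_matricize D (x := corner D hD ∅) (by simp [apply_corner_of_eqOn hD hA]))

end Fits

section Ranks

variable {D : Fin N → ℕ}

abbrev ProperNode (T : MTree N) : Type := {ν : MTree N // ν ∈ T.nodes ∧ ν ≠ T}

theorem not_ranks_skipSum_le {T : MTree N} (hT : T.Valid) (hD : ∀ n, 2 ≤ D n) {i j k : Fin N}
    (hij : i ≠ j) (hik : i ≠ k) (hjk : j ≠ k) :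
    ¬(fun ν : ProperNode T => (matricize D ν.1.label (skipSum D i)).rank) ≤
      fun ν => (matricize D ν.1.label (skipSum D j)).rank := by
  intro hle
  have hj : (matricize D (MTree.leaf j).label (skipSum D i)).rank ≤
      (matricize D (MTree.leaf j).label (skipSum D j)).rank :=
    hle ⟨.leaf j, hT.leaf_mem_nodes j, hT.leaf_ne hij.symm⟩
  rw [MTree.label_leaf,
    rank_matricize_skipSum_of_splitsOthers hD (splitsOthers_singleton hij hik hjk),
    rank_matricize_skipSum_of_not_splitsOthers hD (not_splitsOthers_singleton j)] at hj
  omega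

theorem ranks_eq_of_eqOn_of_le {T : MTree N} (hT : T.Valid) (hD : ∀ n, 2 ≤ D n)
    {i j k : Fin N} {A : Idx D → ℝ} (hA : EqOn A (skipSum D i) (observed D i j))
    (hij : i ≠ j) (hik : i ≠ k) (hjk : j ≠ k)
    (hle : (fun ν : ProperNode T => (matricize D ν.1.label A).rank) ≤
      fun ν => (matricize D ν.1.label (skipSum D i)).rank) :
    (fun ν : ProperNode T => (matricize D ν.1.label A).rank) =
      fun ν => (matricize D ν.1.label (skipSum D i)).rank := by
  have hi : (matricize D (MTree.leaf i).label A).rank ≤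
      (matricize D (MTree.leaf i).label (skipSum D i)).rank :=
    hle ⟨.leaf i, hT.leaf_mem_nodes i, hT.leaf_ne hij⟩
  rw [MTree.label_leaf,
    rank_matricize_skipSum_of_not_splitsOthers hD (not_splitsOthers_singleton i)] at hi
  funext ν
  exact rank_matricize_eq_of_eqOn_of_le hD hA hij hik hjk hi (hle ν)

end Ranks

end HTF

open HTF HTF.MTree in
/-- Proposition 2 in the paper: for every order `N ≥ 3` and mode
dimensions `D_n ≥ 2`, there exists a tensor completion problem such that for every mode
tree `T` over `[N]`, the set of hierarchical tensor ranks of tensors fitting the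
observations includes two incomparable elements, neither of which dominates another
element of the set (other than themselves). -/
theorem statement15 {N : ℕ} (hN : 3 ≤ N) (D : Fin N → ℕ) (hD : ∀ n, 2 ≤ D n) :
    ∃ (Wstar : Idx D → ℝ) (Ω : Finset (Idx D)),
      ∀ T : MTree N, T.Valid →
        ∃ Rt Rt' : {ν : MTree N // ν ∈ T.nodes ∧ ν ≠ T} → ℕ,
          Rt ∈ {g | ∃ A : Idx D → ℝ,
                  (1 / (Ω.card : ℝ)) * ∑ x ∈ Ω, (A x - Wstar x) ^ 2 = 0 ∧
                  ∀ ν : {ν : MTree N // ν ∈ T.nodes ∧ ν ≠ T},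
                    g ν = (matricize D ν.1.label A).rank} ∧
          Rt' ∈ {g | ∃ A : Idx D → ℝ,
                  (1 / (Ω.card : ℝ)) * ∑ x ∈ Ω, (A x - Wstar x) ^ 2 = 0 ∧
                  ∀ ν : {ν : MTree N // ν ∈ T.nodes ∧ ν ≠ T},
                    g ν = (matricize D ν.1.label A).rank} ∧
          ¬ Rt ≤ Rt' ∧ ¬ Rt' ≤ Rt ∧
          ∀ Rt'' ∈ {g | ∃ A : Idx D → ℝ,
                  (1 / (Ω.card : ℝ)) * ∑ x ∈ Ω, (A x - Wstar x) ^ 2 = 0 ∧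
                  ∀ ν : {ν : MTree N // ν ∈ T.nodes ∧ ν ≠ T},
                    g ν = (matricize D ν.1.label A).rank},
            Rt'' ≠ Rt → Rt'' ≠ Rt' → ¬ Rt'' ≤ Rt ∧ ¬ Rt'' ≤ Rt' := by
  obtain ⟨i, j, k, hij, hik, hjk⟩ : ∃ i j k : Fin N, i ≠ j ∧ i ≠ k ∧ j ≠ k :=
    ⟨⟨0, by omega⟩, ⟨1, by omega⟩, ⟨2, by omega⟩, by simp [Fin.ext_iff]⟩
  refine ⟨skipSum D i, observed D i j, fun T hT => ?_⟩
  simp only [mean_sq_sub_eq_zero_iff]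
  have hj : Set.EqOn (skipSum D j) (skipSum D i) (observed D i j) :=
    (eqOn_skipSum_observed i j).symm
  refine ⟨fun ν => (matricize D ν.1.label (skipSum D i)).rank,
    fun ν => (matricize D ν.1.label (skipSum D j)).rank,
    ⟨_, fun _ _ => rfl, fun _ => rfl⟩, ⟨_, hj, fun _ => rfl⟩,
    not_ranks_skipSum_le hT hD hij hik hjk, not_ranks_skipSum_le hT hD hij.symm hjk hik, ?_⟩
  rintro g ⟨A, hA, hg⟩ hgi hgj
  obtain rfl : g = fun ν => (matricize D ν.1.label A).rank := funext hg
  have hA' : Set.EqOn A (skipSum D j) (observed D j i) := by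
    rw [observed_comm]
    exact Set.EqOn.trans hA (eqOn_skipSum_observed i j)
  exact ⟨fun hle => hgi (ranks_eq_of_eqOn_of_le hT hD hA hij hik hjk hle),
    fun hle => hgj (ranks_eq_of_eqOn_of_le hT hD hA' hij.symm hjk hik hle)⟩
end
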